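/- arXiv:2407.06156 — 5 statements merged into one kernel-verified Lean document; each statement's English description precedes it below -/
import Mathlib

section
/- Let λ₁,…,λ_k ≥ 0 and t ≥ 0, and for n ∈ ℕ set p(n,t) = ∑_{x ∈ Ω(k,n)} ∏_{j=1}^{k} ((λ_j t)^{x_j}/x_j!)·e^{-λ_j t} with Ω(k,n) = {x ∈ ℕ^k : ∑_j j x_j = n}. Then for every n ≥ 1, n·p(n,t) = t·∑_{j=1}^{min(n,k)} j·λ_j·p(n-j,t). -/
open scoped BigOperators

/-- State probabilities of the generalized counting process. -/
noncomputable def gcpPMF (k : ℕ) (lam : Fin k → ℝ) (t : ℝ) (n : ℕ) : ℝ :=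
  ∑' x : Fin k → ℕ,
    if (∑ j, (j.1 + 1) * x j) = n then
      ∏ j, (lam j * t) ^ (x j) / (Nat.factorial (x j) : ℝ) * Real.exp (-(lam j * t))
    else 0

/-!
The state probabilities are those of `∑ j (j+1) X_j` for independent `X_j ~ Poisson(λ_j t)`, and
the recurrence is Panjer's recursion for this compound Poisson law. Its proof rests on the
identity `(x_j + 1) p(x + e_j) = λ_j t p(x)` for the Poisson product weight `p`: multiplying the
level-`n` sum by `n = ∑ j (j+1) x_j` and shifting `x_j` down by one turns the `j`-th summand into
`(j+1) λ_j t` times the level-`(n-(j+1))` sum.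
-/

open Finset Function

namespace CompoundPoisson

variable {ι : Type*} [Fintype ι] [DecidableEq ι]

noncomputable def poissonProd (a : ι → ℝ) (x : ι → ℕ) : ℝ :=
  ∏ i, a i ^ x i / (x i).factorial * Real.exp (-a i)

/-- The law of `∑ i, c i * X i` for independent `X i ~ Poisson (a i)`. -/
noncomputable def pmf (c : ι → ℕ) (a : ι → ℝ) (n : ℕ) : ℝ :=
  ∑' x : ι → ℕ, if ∑ i, c i * x i = n then poissonProd a x else 0

theorem succ_mul_poissonProd_add_single (a : ι → ℝ) (x : ι → ℕ) (i : ι) :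
    ((x i : ℝ) + 1) * poissonProd a (x + Pi.single i 1) = a i * poissonProd a x := by
  set y : ι → ℕ := x + Pi.single i 1 with hy
  have hyi : y i = x i + 1 := by simp [hy]
  have hrest : ∏ j ∈ {i}ᶜ, a j ^ y j / (y j).factorial * Real.exp (-a j) =
      ∏ j ∈ {i}ᶜ, a j ^ x j / (x j).factorial * Real.exp (-a j) :=
    prod_congr rfl fun j hj => by simp_all
  rw [poissonProd, poissonProd, Fintype.prod_eq_mul_prod_compl i, hrest,
    Fintype.prod_eq_mul_prod_compl i, hyi, pow_succ, Nat.factorial_succ]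
  push_cast
  field_simp

theorem sum_mul_add_single (c x : ι → ℕ) (i : ι) :
    ∑ j, c j * (x + Pi.single i 1 : ι → ℕ) j = ∑ j, c j * x j + c i := by
  simp [mul_add, sum_add_distrib, Pi.single_apply]

variable {c : ι → ℕ}

theorem finite_setOf_sum_mul_eq (hc : ∀ i, 0 < c i) (n : ℕ) :
    {x : ι → ℕ | ∑ i, c i * x i = n}.Finite :=
  (Set.finite_Iic fun _ => n).subset fun x hx i =>
    (Nat.le_mul_of_pos_left _ (hc i)).trans <|
      hx ▸ single_le_sum (f := fun i => c i * x i) (fun _ _ => Nat.zero_le _) (mem_univ i)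

theorem tsum_coord_mul (a : ι → ℝ) (i : ι) (n : ℕ) :
    ∑' x : ι → ℕ, (x i : ℝ) * (if ∑ j, c j * x j = n then poissonProd a x else 0) =
      if c i ≤ n then a i * pmf c a (n - c i) else 0 := by
  have hsupp : support (fun x : ι → ℕ =>
      (x i : ℝ) * (if ∑ j, c j * x j = n then poissonProd a x else 0)) ⊆
      Set.range fun y : ι → ℕ => y + Pi.single i 1 := by
    intro x hx
    have hxi : x i ≠ 0 := by rintro h; simp [h] at hx
    refine ⟨x - Pi.single i 1, funext fun j => ?_⟩
    by_cases hj : j = i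
    · subst hj; simp; omega
    · simp [hj]
  rw [← (add_left_injective (Pi.single i 1)).tsum_eq hsupp]
  simp only [sum_mul_add_single]
  simp only [Pi.add_apply, Pi.single_eq_same, Nat.cast_add, Nat.cast_one, mul_ite, mul_zero,
    succ_mul_poissonProd_add_single]
  split_ifs with hci
  · rw [pmf, ← tsum_mul_left]
    congr 1 with x
    simp only [mul_ite, mul_zero, eq_tsub_iff_add_eq_of_le hci]
  · simp only [show ∀ m, m + c i ≠ n by omega, if_false, tsum_zero]

theorem natCast_mul_pmf (hc : ∀ i, 0 < c i) (a : ι → ℝ) (n : ℕ) :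
    (n : ℝ) * pmf c a n = ∑ i, if c i ≤ n then c i * a i * pmf c a (n - c i) else 0 := by
  have hsum : ∀ x : ι → ℕ, (n : ℝ) * (if ∑ j, c j * x j = n then poissonProd a x else 0) =
      ∑ i, (c i : ℝ) * ((x i : ℝ) * (if ∑ j, c j * x j = n then poissonProd a x else 0)) := by
    intro x
    split_ifs with hx
    · rw [← hx]; push_cast; simp only [sum_mul, mul_assoc]
    · simp
  have hsummable : ∀ i ∈ (univ : Finset ι), Summable fun x : ι → ℕ =>
      (c i : ℝ) * ((x i : ℝ) * (if ∑ j, c j * x j = n then poissonProd a x else 0)) :=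
    fun i _ => summable_of_hasFiniteSupport <| (finite_setOf_sum_mul_eq hc n).subset
      fun x hx => by_contra fun h => hx (by simp_all)
  rw [pmf, ← tsum_mul_left, tsum_congr hsum, Summable.tsum_finsetSum hsummable]
  refine sum_congr rfl fun i _ => ?_
  rw [tsum_mul_left, tsum_coord_mul]
  split_ifs <;> ring

end CompoundPoisson

theorem gcp_pmf_recurrence_general (k : ℕ) (lam : Fin k → ℝ)
    (t : ℝ) (n : ℕ) :
    (n : ℝ) * gcpPMF k lam t n =
      t * ∑ j ∈ Finset.univ.filter (fun j : Fin k => j.1 + 1 ≤ n),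
        ((j.1 : ℝ) + 1) * lam j * gcpPMF k lam t (n - (j.1 + 1)) := by
  have hgcp : gcpPMF k lam t = CompoundPoisson.pmf (fun j : Fin k => j.1 + 1) (lam · * t) := rfl
  rw [hgcp, CompoundPoisson.natCast_mul_pmf (fun _ => Nat.succ_pos _), sum_filter, mul_sum]
  refine sum_congr rfl fun j _ => ?_
  split_ifs <;> push_cast <;> ring

/-- Recurrence relation for the state probabilities of the GCP:
`n·p(n,t) = t·∑_{j=1}^{min(n,k)} j·λ_j·p(n-j,t)` for `n ≥ 1`. -/
theorem gcp_pmf_recurrence (k : ℕ) (lam : Fin k → ℝ) (hlam : ∀ j, 0 ≤ lam j)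
    (t : ℝ) (ht : 0 ≤ t) (n : ℕ) (hn : 1 ≤ n) :
    (n : ℝ) * gcpPMF k lam t n =
      t * ∑ j ∈ Finset.univ.filter (fun j : Fin k => j.1 + 1 ≤ n),
        ((j.1 : ℝ) + 1) * lam j * gcpPMF k lam t (n - (j.1 + 1)) :=
  gcp_pmf_recurrence_general k lam t n
end

section
/- Let β ∈ (0,1], c ≥ 0 and z ∈ ℝ with |z| ≤ 1. Then ∑_{r=0}^{∞} z^r · ( ∑_{x=r}^{∞} (-1)^{x-r}·C(x,r)·c^x/Γ(βx+1) ) = E_{β,1}(-c(1-z)), where C(x,r) is the binomial coefficient and E_{β,1}(w) = ∑_{x=0}^{∞} w^x/Γ(βx+1) is the Mittag-Leffler function. Moreover all series involved converge absolutely. -/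
/-!
Summing absolute values over `r` first, the double series
`∑_x ∑_r z^r (-1)^(x-r) C(x,r) c^x / Γ(βx+1)` is dominated by the Mittag-Leffler series
`∑_x ((|z| + 1) |c|)^x / Γ(βx+1)`, which converges because `Γ(βx+1)` eventually exceeds every
exponential `Kˣ`. Hence the order of summation may be swapped, and for fixed `x` the binomial
theorem sums the inner series over `r` to `(z - 1)^x c^x / Γ(βx+1)`.
-/

open Filter Real
open scoped Nat

lemma Real.eventually_rpow_le_Gamma_add_one {K : ℝ} (hK : 0 ≤ K) :
    ∀ᶠ y : ℝ in atTop, K ^ y ≤ Gamma (y + 1) := by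
  set D := max 1 K
  have hfactorial : ∀ᶠ m : ℕ in atTop, D ^ (m + 1) ≤ m ! := by
    have hlim := (FloorSemiring.tendsto_pow_div_factorial_atTop D).const_mul D
    rw [mul_zero] at hlim
    filter_upwards [hlim.eventually_le_const one_pos] with m hm
    rwa [← mul_div_assoc, ← pow_succ', div_le_one (by positivity)] at hm
  filter_upwards [tendsto_nat_floor_atTop.eventually hfactorial, eventually_ge_atTop 1]
    with y hy hy1
  have hfloor : (1 : ℝ) ≤ ⌊y⌋₊ := by exact_mod_cast Nat.one_le_floor_iff y |>.mpr hy1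
  calc K ^ y ≤ D ^ y := rpow_le_rpow hK (le_max_right 1 K) (by linarith)
    _ ≤ D ^ ((⌊y⌋₊ + 1 : ℕ) : ℝ) := by
        gcongr
        · exact le_max_left 1 K
        · push_cast; exact (Nat.lt_floor_add_one y).le
    _ ≤ ⌊y⌋₊ ! := by rwa [rpow_natCast]
    _ = Gamma (⌊y⌋₊ + 1) := (Gamma_nat_eq_factorial _).symm
    _ ≤ Gamma (y + 1) :=
        Gamma_strictMonoOn_Ici.monotoneOn (by simp; linarith) (by simp; linarith)
          (by linarith [Nat.floor_le (zero_le_one.trans hy1)])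

/-- Convergence of the Mittag-Leffler series `E_{β,1}(A) = ∑ Aⁿ / Γ(βn + 1)`. -/
theorem summable_pow_div_Gamma_mul_add_one {β : ℝ} (hβ : 0 < β) (A : ℝ) :
    Summable fun n : ℕ => A ^ n / Gamma (β * n + 1) := by
  have hgrowth : ∀ᶠ n : ℕ in atTop, (2 * |A|) ^ n ≤ Gamma (β * n + 1) := by
    filter_upwards [(tendsto_natCast_atTop_atTop.const_mul_atTop hβ).eventually
      (eventually_rpow_le_Gamma_add_one (K := (2 * |A|) ^ (1 / β)) (by positivity))] with n hn
    rwa [← rpow_mul (by positivity), one_div, inv_mul_cancel_left₀ hβ.ne', rpow_natCast] at hn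
  refine .of_norm_bounded_eventually_nat summable_geometric_two ?_
  filter_upwards [hgrowth] with n hn
  have hΓ : 0 < Gamma (β * n + 1) := Gamma_pos_of_pos (by positivity)
  rw [norm_div, norm_pow, norm_eq_abs, norm_of_nonneg hΓ.le, div_le_iff₀ hΓ]
  calc |A| ^ n = (1 / 2) ^ n * (2 * |A|) ^ n := by rw [← mul_pow]; ring
    _ ≤ (1 / 2) ^ n * Gamma (β * n + 1) := by gcongr

lemma tsum_pow_mul_pow_mul_choose (u v : ℝ) (x : ℕ) :
    ∑' r : ℕ, u ^ r * v ^ (x - r) * x.choose r = (u + v) ^ x := by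
  rw [add_pow, tsum_eq_sum]
  intro r hr
  simp [Nat.choose_eq_zero_of_lt (by simpa [Nat.lt_succ_iff] using hr : x < r)]

section BinomialTransform

variable {u v : ℝ} {w : ℕ → ℝ}

lemma summable_pow_mul_binomial (hw : Summable fun x => (|u| + |v|) ^ x * |w x|) :
    Summable fun p : ℕ × ℕ => u ^ p.2 * (v ^ (p.1 - p.2) * p.1.choose p.2 * w p.1) := by
  rw [← summable_abs_iff, summable_prod_of_nonneg fun _ => abs_nonneg _]
  have habs : ∀ x r : ℕ, |u ^ r * (v ^ (x - r) * x.choose r * w x)| =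
      |u| ^ r * |v| ^ (x - r) * x.choose r * |w x| := by
    intro x r
    simp only [abs_mul, abs_pow, Nat.abs_cast]
    ring
  refine ⟨fun x => summable_of_ne_finset_zero (s := Finset.range (x + 1)) fun r hr => ?_, ?_⟩
  · simp [Nat.choose_eq_zero_of_lt (by simpa [Nat.lt_succ_iff] using hr : x < r)]
  · simpa only [habs, tsum_mul_right, tsum_pow_mul_pow_mul_choose] using hw

theorem hasSum_pow_mul_tsum_binomial (hw : Summable fun x => (|u| + |v|) ^ x * |w x|) :
    HasSum (fun r : ℕ => u ^ r * ∑' x : ℕ, v ^ (x - r) * x.choose r * w x)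
      (∑' x : ℕ, (u + v) ^ x * w x) := by
  have hg := summable_pow_mul_binomial hw
  have hswap : ∑' r : ℕ, ∑' x : ℕ, u ^ r * (v ^ (x - r) * x.choose r * w x) =
      ∑' x : ℕ, (u + v) ^ x * w x := by
    rw [Summable.tsum_comm (f := fun x r => u ^ r * (v ^ (x - r) * x.choose r * w x)) hg]
    refine tsum_congr fun x => ?_
    simp_rw [← mul_assoc, tsum_mul_right, tsum_pow_mul_pow_mul_choose]
  simp_rw [← tsum_mul_left]
  exact hswap ▸ hg.prod_symm.prod.hasSum

end BinomialTransform

theorem tfpp_pgf_general (β : ℝ) (hβ0 : 0 < β) (c : ℝ) (z : ℝ) :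
    (∀ r : ℕ, Summable (fun x : ℕ =>
        if r ≤ x then (-1 : ℝ) ^ (x - r) * (Nat.choose x r : ℝ) * c ^ x /
          Real.Gamma (β * x + 1) else 0)) ∧
    Summable (fun r : ℕ => z ^ r * ∑' x : ℕ,
        (if r ≤ x then (-1 : ℝ) ^ (x - r) * (Nat.choose x r : ℝ) * c ^ x /
          Real.Gamma (β * x + 1) else 0)) ∧
    Summable (fun x : ℕ => (-c * (1 - z)) ^ x / Real.Gamma (β * x + 1)) ∧
    (∑' r : ℕ, z ^ r * ∑' x : ℕ,
        (if r ≤ x then (-1 : ℝ) ^ (x - r) * (Nat.choose x r : ℝ) * c ^ x /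
          Real.Gamma (β * x + 1) else 0)) =
      ∑' x : ℕ, (-c * (1 - z)) ^ x / Real.Gamma (β * x + 1) := by
  set w : ℕ → ℝ := fun x => c ^ x / Gamma (β * x + 1)
  have hΓ (x : ℕ) : 0 < Gamma (β * x + 1) := Gamma_pos_of_pos (by positivity)
  have hterm (r x : ℕ) : (if r ≤ x then (-1 : ℝ) ^ (x - r) * (x.choose r : ℝ) * c ^ x /
      Gamma (β * x + 1) else 0) = (-1) ^ (x - r) * x.choose r * w x := by
    split_ifs with h
    · exact mul_div_assoc _ _ _
    · simp [Nat.choose_eq_zero_of_lt (not_le.mp h)]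
  have hw (A : ℝ) : Summable fun x => A ^ x * |w x| := by
    convert summable_pow_div_Gamma_mul_add_one hβ0 (A * |c|) using 2 with x
    rw [abs_div, abs_pow, abs_of_pos (hΓ x), mul_pow, mul_div_assoc]
  have hpgf := hasSum_pow_mul_tsum_binomial (u := z) (v := -1) (hw _)
  simp only [hterm]
  refine ⟨fun r => ?_, hpgf.summable, summable_pow_div_Gamma_mul_add_one hβ0 _,
    hpgf.tsum_eq.trans (tsum_congr fun x => ?_)⟩
  · simpa using (summable_pow_mul_binomial (u := 1) (v := -1) (hw _)).prod_symm.prod_factor r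
  · rw [show -c * (1 - z) = (z + -1) * c by ring, mul_pow, mul_div_assoc]

/-- The pgf of the time fractional Poisson process equals a Mittag-Leffler function:
`∑_{r≥0} z^r ∑_{x≥r} (-1)^{x-r} C(x,r) c^x/Γ(βx+1) = E_{β,1}(-c(1-z))`,
together with absolute convergence of all the series involved. -/
theorem tfpp_pgf (β : ℝ) (hβ0 : 0 < β) (hβ1 : β ≤ 1) (c : ℝ) (hc : 0 ≤ c)
    (z : ℝ) (hz : |z| ≤ 1) :
    (∀ r : ℕ, Summable (fun x : ℕ =>
        if r ≤ x then (-1 : ℝ) ^ (x - r) * (Nat.choose x r : ℝ) * c ^ x /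
          Real.Gamma (β * x + 1) else 0)) ∧
    Summable (fun r : ℕ => z ^ r * ∑' x : ℕ,
        (if r ≤ x then (-1 : ℝ) ^ (x - r) * (Nat.choose x r : ℝ) * c ^ x /
          Real.Gamma (β * x + 1) else 0)) ∧
    Summable (fun x : ℕ => (-c * (1 - z)) ^ x / Real.Gamma (β * x + 1)) ∧
    (∑' r : ℕ, z ^ r * ∑' x : ℕ,
        (if r ≤ x then (-1 : ℝ) ^ (x - r) * (Nat.choose x r : ℝ) * c ^ x /
          Real.Gamma (β * x + 1) else 0)) =
      ∑' x : ℕ, (-c * (1 - z)) ^ x / Real.Gamma (β * x + 1) :=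
  tfpp_pgf_general β hβ0 c z
end

section
/- Let α ∈ (0,1), λ₁,…,λ_k > 0, λ = ∑_{j=1}^{k} λ_j, and n ≥ 1 an integer. Then (α/Γ(1-α))·∫_0^∞ ( ∑_{x ∈ Ω(k,n)} ∏_{j=1}^{k} ((λ_j s)^{x_j}/x_j!)·e^{-λ_j s} )·s^{-α-1} ds = (α·λ^α/Γ(1-α))·∑_{x ∈ Ω(k,n)} Γ(∑_{j=1}^{k} x_j - α)·∏_{j=1}^{k} ((λ_j/λ)^{x_j}/x_j!), where Ω(k,n) = {x ∈ ℕ^k : ∑_j j x_j = n}. -/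
/-!
Each state probability `p(n, s)` is a finite sum, over `x ∈ Ω(k, n)`, of
`(∏ⱼ λⱼ^{xⱼ}/xⱼ!) · s^{|x|} e^{-λ s}` with `|x| = ∑ⱼ xⱼ ≥ 1`. Integrating term by term
against `s^{-α-1}` gives Gamma integrals `∫₀^∞ s^{|x|-α-1} e^{-λ s} ds = Γ(|x| - α) λ^{α-|x|}`,
which converge because `α < 1 ≤ |x|`; the factor `λ^{-|x|}` is then absorbed into the
product as `∏ⱼ (λⱼ/λ)^{xⱼ}`.
-/

open scoped BigOperators
open MeasureTheory

open Finset Real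

/-- `Ω(k, n)`, shifted to `Fin k`: `x j` is the multiplicity of the part `j + 1`. -/
def weightedCompositions (k n : ℕ) : Finset (Fin k → ℕ) :=
  (Fintype.piFinset fun _ => range (n + 1)).filter fun x => ∑ j, (j.1 + 1) * x j = n

section weightedCompositions

variable {k n : ℕ} {x : Fin k → ℕ}

theorem mem_weightedCompositions :
    x ∈ weightedCompositions k n ↔ ∑ j, (j.1 + 1) * x j = n := by
  simp only [weightedCompositions, mem_filter, Fintype.mem_piFinset, mem_range,
    and_iff_right_iff_imp]
  rintro rfl j
  exact Nat.lt_succ_of_le <| (Nat.le_mul_of_pos_left _ j.succ_pos).trans <|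
    single_le_sum (f := fun i : Fin k => (i.1 + 1) * x i) (fun _ _ => Nat.zero_le _) (mem_univ j)

theorem one_le_sum_of_mem_weightedCompositions (hn : 0 < n) (hx : x ∈ weightedCompositions k n) :
    1 ≤ ∑ j, x j := by
  rw [mem_weightedCompositions] at hx
  by_contra! h
  have hzero : ∀ j, x j = 0 := by simpa using h
  simp only [hzero, mul_zero, sum_const_zero] at hx
  omega

theorem tsum_ite_eq_sum_weightedCompositions {M : Type*} [AddCommMonoid M] [TopologicalSpace M]
    (f : (Fin k → ℕ) → M) :
    ∑' x : Fin k → ℕ, (if ∑ j, (j.1 + 1) * x j = n then f x else 0) =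
      ∑ x ∈ weightedCompositions k n, f x := by
  rw [tsum_eq_sum fun x hx => if_neg (mt mem_weightedCompositions.2 hx)]
  exact sum_congr rfl fun x hx => if_pos (mem_weightedCompositions.1 hx)

end weightedCompositions

theorem prod_mul_pow_div_factorial_mul_exp {ι : Type*} [Fintype ι] (lam : ι → ℝ) (x : ι → ℕ)
    (t : ℝ) :
    ∏ j, (lam j * t) ^ x j / ((x j).factorial : ℝ) * exp (-(lam j * t)) =
      (∏ j, lam j ^ x j / ((x j).factorial : ℝ)) * (t ^ (∑ j, x j) * exp (-((∑ j, lam j) * t))) := by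
  rw [sum_mul, ← sum_neg_distrib, exp_sum, ← prod_pow_eq_pow_sum, ← prod_mul_distrib,
    ← prod_mul_distrib]
  refine prod_congr rfl fun j _ => ?_
  ring

theorem prod_div_pow_div_factorial {ι K : Type*} [Fintype ι] [Field K] (a : ι → K) (c : K)
    (x : ι → ℕ) :
    ∏ j, (a j / c) ^ x j / ((x j).factorial : K) =
      (∏ j, a j ^ x j / ((x j).factorial : K)) / c ^ ∑ j, x j := by
  rw [← prod_pow_eq_pow_sum, ← prod_div_distrib]
  refine prod_congr rfl fun j _ => ?_
  rw [div_pow]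
  ring

theorem gcpPMF_eq_sum (k : ℕ) (lam : Fin k → ℝ) (t : ℝ) (n : ℕ) :
    gcpPMF k lam t n = ∑ x ∈ weightedCompositions k n,
      (∏ j, lam j ^ x j / ((x j).factorial : ℝ)) * (t ^ (∑ j, x j) * exp (-((∑ j, lam j) * t))) := by
  rw [gcpPMF, tsum_ite_eq_sum_weightedCompositions]
  exact sum_congr rfl fun x _ => prod_mul_pow_div_factorial_mul_exp lam x t

theorem pow_mul_exp_neg_mul_mul_rpow_eqOn (m : ℕ) (α L : ℝ) :
    Set.EqOn (fun s : ℝ => s ^ m * exp (-(L * s)) * s ^ (-α - 1))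
      (fun s => s ^ ((m - α) - 1) * exp (-(L * s))) (Set.Ioi 0) := by
  intro s hs
  dsimp only
  rw [mul_right_comm, ← rpow_natCast, ← rpow_add hs]
  ring_nf

section GammaKernel

variable {m : ℕ} {α L : ℝ}

theorem integrableOn_pow_mul_exp_neg_mul_mul_rpow (hα : α < m) (hL : 0 < L) :
    IntegrableOn (fun s : ℝ => s ^ m * exp (-(L * s)) * s ^ (-α - 1)) (Set.Ioi 0) := by
  refine IntegrableOn.congr_fun ?_ (pow_mul_exp_neg_mul_mul_rpow_eqOn m α L).symm
    measurableSet_Ioi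
  simpa [neg_mul] using
    integrableOn_rpow_mul_exp_neg_mul_rpow (s := (m - α) - 1) (by linarith) one_pos hL

theorem integral_pow_mul_exp_neg_mul_mul_rpow (hα : α < m) (hL : 0 < L) :
    ∫ s in Set.Ioi 0, s ^ m * exp (-(L * s)) * s ^ (-α - 1) = Gamma (m - α) * L ^ α / L ^ m := by
  rw [setIntegral_congr_fun measurableSet_Ioi (pow_mul_exp_neg_mul_mul_rpow_eqOn m α L),
    integral_rpow_mul_exp_neg_mul_Ioi (by linarith) hL, div_rpow zero_le_one hL.le, one_rpow,
    rpow_sub hL, rpow_natCast]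
  field_simp

end GammaKernel

theorem integral_gcpPMF_mul_rpow {α : ℝ} (hα : α < 1) {k : ℕ} {lam : Fin k → ℝ}
    (hlam : ∀ j, 0 < lam j) {n : ℕ} (hn : 0 < n) :
    ∫ s in Set.Ioi 0, gcpPMF k lam s n * s ^ (-α - 1) =
      ∑ x ∈ weightedCompositions k n, (∏ j, lam j ^ x j / ((x j).factorial : ℝ)) *
        (Gamma ((∑ j, x j : ℕ) - α) * (∑ j, lam j) ^ α / (∑ j, lam j) ^ ∑ j, x j) := by
  set c : (Fin k → ℕ) → ℝ := fun x => ∏ j, lam j ^ x j / ((x j).factorial : ℝ)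
  have hbounds : ∀ x ∈ weightedCompositions k n, α < (∑ j, x j : ℕ) ∧ 0 < ∑ j, lam j := by
    intro x hx
    have hx1 := one_le_sum_of_mem_weightedCompositions hn hx
    exact ⟨hα.trans_le (Nat.one_le_cast.2 hx1),
      sum_pos (fun j _ => hlam j) (nonempty_of_sum_ne_zero (f := x) (by omega))⟩
  have hsum : ∀ s, gcpPMF k lam s n * s ^ (-α - 1) = ∑ x ∈ weightedCompositions k n,
      c x * (s ^ (∑ j, x j) * exp (-((∑ j, lam j) * s)) * s ^ (-α - 1)) := by
    intro s
    rw [gcpPMF_eq_sum, Finset.sum_mul]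
    exact sum_congr rfl fun x _ => mul_assoc _ _ _
  simp_rw [hsum]
  rw [integral_finsetSum]
  · refine sum_congr rfl fun x hx => ?_
    rw [integral_const_mul, integral_pow_mul_exp_neg_mul_mul_rpow (hbounds x hx).1 (hbounds x hx).2]
  · intro x hx
    exact (integrableOn_pow_mul_exp_neg_mul_mul_rpow (hbounds x hx).1 (hbounds x hx).2).const_mul _

theorem gsfcp_levy_measure_general (α : ℝ) (hα1 : α < 1)
    (k : ℕ) (lam : Fin k → ℝ) (hlam : ∀ j, 0 < lam j) (n : ℕ) (hn : 1 ≤ n) :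
    (α / Real.Gamma (1 - α)) *
        ∫ s in Set.Ioi (0 : ℝ), gcpPMF k lam s n * s ^ (-α - 1) =
      α * (∑ j, lam j) ^ α / Real.Gamma (1 - α) *
        ∑' x : Fin k → ℕ,
          (if (∑ j, (j.1 + 1) * x j) = n then
            Real.Gamma ((∑ j, (x j : ℝ)) - α) *
              ∏ j, (lam j / ∑ i, lam i) ^ (x j) / (Nat.factorial (x j) : ℝ)
          else 0) := by
  rw [integral_gcpPMF_mul_rpow hα1 hlam hn, tsum_ite_eq_sum_weightedCompositions, mul_sum,
    mul_sum]
  refine sum_congr rfl fun x _ => ?_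
  rw [prod_div_pow_div_factorial, Nat.cast_sum]
  ring

/-- Lévy measure of the generalized space fractional counting process at level `n ≥ 1`:
`(α/Γ(1-α))·∫_0^∞ p(n,s)·s^{-α-1} ds
  = (α·λ^α/Γ(1-α))·∑_{x ∈ Ω(k,n)} Γ(∑_j x_j - α)·∏_j (λ_j/λ)^{x_j}/x_j!`. -/
theorem gsfcp_levy_measure (α : ℝ) (hα0 : 0 < α) (hα1 : α < 1)
    (k : ℕ) (lam : Fin k → ℝ) (hlam : ∀ j, 0 < lam j) (n : ℕ) (hn : 1 ≤ n) :
    (α / Real.Gamma (1 - α)) *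
        ∫ s in Set.Ioi (0 : ℝ), gcpPMF k lam s n * s ^ (-α - 1) =
      α * (∑ j, lam j) ^ α / Real.Gamma (1 - α) *
        ∑' x : Fin k → ℕ,
          (if (∑ j, (j.1 + 1) * x j) = n then
            Real.Gamma ((∑ j, (x j : ℝ)) - α) *
              ∏ j, (lam j / ∑ i, lam i) ^ (x j) / (Nat.factorial (x j) : ℝ)
          else 0) :=
  gsfcp_levy_measure_general α hα1 k lam hlam n hn
end

section
/- Let α ∈ (0,1), λ₁,…,λ_k > 0, λ = ∑_{j=1}^{k} λ_j, t ≥ 0, and u ∈ ℝ with 0 ≤ u ≤ 1. Then exp(-t·(∑_{j=1}^{k} λ_j(1-u^j))^α) = ∑_{n=0}^{∞} u^n · ( ∑_{x ∈ Ω(k,n)} ∑_{r=0}^{∞} ((-tλ^α)^r/r!)·(Γ(αr+1)/Γ(αr - ∑_{j=1}^{k} x_j + 1))·∏_{j=1}^{k} ((-λ_j/λ)^{x_j}/x_j!) ), where Ω(k,n) = {x ∈ ℕ^k : ∑_j j x_j = n}, with all series converging absolutely. -/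
open scoped BigOperators

/-- The coefficient `p^α(n,t)`: pmf of the generalized space fractional counting process.
Note `Real.Gamma` vanishes at nonpositive integers, so `1/Γ` is `0` there. -/
noncomputable def gsfcpPMF (α : ℝ) (k : ℕ) (lam : Fin k → ℝ) (t : ℝ) (n : ℕ) : ℝ :=
  ∑' x : Fin k → ℕ,
    if (∑ j, (j.1 + 1) * x j) = n then
      ∑' r : ℕ, (-(t * (∑ j, lam j) ^ α)) ^ r / (Nat.factorial r : ℝ) *
        (Real.Gamma (α * r + 1) / Real.Gamma (α * r - (∑ j, (x j : ℝ)) + 1)) *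
        ∏ j, (-(lam j) / ∑ i, lam i) ^ (x j) / (Nat.factorial (x j) : ℝ)
    else 0


open Finset Filter Topology

namespace GsfcpAux

noncomputable def gb (β : ℝ) (m : ℕ) : ℝ :=
  (∏ i ∈ Finset.range m, (β - i)) / (Nat.factorial m : ℝ)

lemma gb_zero (β : ℝ) : gb β 0 = 1 := by simp [gb]

lemma gb_succ (β : ℝ) (m : ℕ) : gb β (m + 1) = gb β m * ((β - m) / (m + 1)) := by
  unfold gb
  rw [Finset.prod_range_succ, Nat.factorial_succ, div_mul_div_comm]
  push_cast
  congr 1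
  ring

lemma gb_nat_zero_succ (m : ℕ) : gb 0 (m + 1) = 0 := by
  have h0 : (0 : ℕ) ∈ Finset.range (m + 1) := Finset.mem_range.mpr (Nat.succ_pos m)
  simp [gb, Finset.prod_eq_zero h0]

lemma gamma_ratio (β : ℝ) (hβ : 0 ≤ β) (m : ℕ) :
    Real.Gamma (β + 1) / Real.Gamma (β - m + 1) = ∏ i ∈ Finset.range m, (β - i) := by
  induction m with
  | zero => simp [div_self (Real.Gamma_pos_of_pos (by linarith : (0:ℝ) < β + 1)).ne']
  | succ m ih =>
    rw [Finset.prod_range_succ, ← ih]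
    have hm : β - ((m : ℕ) + 1 : ℕ) + 1 = β - m := by push_cast; ring
    rw [hm]
    rcases eq_or_ne (β - (m : ℝ)) 0 with h0 | h0
    · rw [h0]
      simp [Real.Gamma_zero]
    · rw [show β - (m:ℝ) + 1 = (β - m) + 1 from rfl, Real.Gamma_add_one h0]
      rcases eq_or_ne (Real.Gamma (β - m)) 0 with hG | hG
      · rw [hG]
        simp
      · field_simp

lemma gb_eq_gamma_ratio (β : ℝ) (hβ : 0 ≤ β) (m : ℕ) :
    Real.Gamma (β + 1) / Real.Gamma (β - m + 1) = gb β m * (Nat.factorial m : ℝ) := by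
  rw [gamma_ratio β hβ m, gb, div_mul_cancel₀]
  exact_mod_cast (Nat.factorial_pos m).ne'

lemma abs_gb_succ (β : ℝ) (m : ℕ) :
    |gb β (m + 1)| = |gb β m| * (|β - m| / (m + 1)) := by
  rw [gb_succ, abs_mul, abs_div, abs_of_nonneg (by positivity : (0:ℝ) ≤ (m:ℝ) + 1)]

/-- Ratio-test summability inside the unit disc, with an extra linear factor. -/
lemma summable_abs_gb_mul (β : ℝ) {r : ℝ} (hr0 : 0 ≤ r) (hr1 : r < 1) :
    Summable (fun m : ℕ => |gb β m| * (m + 1) * r ^ m) := by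
  rcases eq_or_lt_of_le hr0 with rfl | hr
  · apply summable_of_ne_finset_zero (s := {0})
    intro m hm
    have : m ≠ 0 := by simpa using hm
    simp [zero_pow this]
  · set r' := (r + 1) / 2 with hr'
    have hrr' : r < r' := by rw [hr']; linarith
    have hr'1 : r' < 1 := by rw [hr']; linarith
    have hr'0 : 0 < r' := lt_trans hr hrr'
    apply summable_of_ratio_norm_eventually_le hr'1
    -- the ratio factor tends to 1
    have h1 : Tendsto (fun m : ℕ => |β - m| / ((m:ℝ) + 1)) atTop (𝓝 1) := by
      have he : ∀ᶠ m : ℕ in atTop, (1 : ℝ) - (1 + β) / ((m:ℝ) + 1) = |β - m| / ((m:ℝ) + 1) := by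
        filter_upwards [eventually_ge_atTop (Nat.ceil (max β 0))] with m hm
        have hβm : β ≤ (m : ℝ) := le_trans (le_max_left _ _) ((Nat.ceil_le.mp le_rfl).trans (by exact_mod_cast hm))
        have hm1 : (0:ℝ) < (m:ℝ) + 1 := by positivity
        rw [abs_of_nonpos (by linarith : β - (m:ℝ) ≤ 0)]
        field_simp
        ring
      apply Tendsto.congr' he
      have : Tendsto (fun m : ℕ => (1 + β) / ((m:ℝ) + 1)) atTop (𝓝 0) := by
        apply Tendsto.div_atTop tendsto_const_nhds
        exact tendsto_atTop_add_const_right _ _ tendsto_natCast_atTop_atTop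
      simpa using tendsto_const_nhds.sub this
    have h2 : Tendsto (fun m : ℕ => ((m:ℝ) + 2) / ((m:ℝ) + 1)) atTop (𝓝 1) := by
      have he : ∀ᶠ m : ℕ in atTop, (1 : ℝ) + 1 / ((m:ℝ) + 1) = ((m:ℝ) + 2) / ((m:ℝ) + 1) := by
        filter_upwards with m
        have hm1 : (0:ℝ) < (m:ℝ) + 1 := by positivity
        field_simp
        ring
      apply Tendsto.congr' he
      have : Tendsto (fun m : ℕ => (1:ℝ) / ((m:ℝ) + 1)) atTop (𝓝 0) := by
        apply Tendsto.div_atTop tendsto_const_nhds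
        exact tendsto_atTop_add_const_right _ _ tendsto_natCast_atTop_atTop
      simpa using tendsto_const_nhds.add this
    have h3 : Tendsto (fun m : ℕ => |β - m| / ((m:ℝ) + 1) * (((m:ℝ) + 2) / ((m:ℝ) + 1)))
        atTop (𝓝 1) := by simpa using h1.mul h2
    have hlt : (1 : ℝ) < r' / r := (one_lt_div hr).mpr hrr'
    filter_upwards [h3.eventually_lt_const hlt] with m hm
    have hQ0 : 0 ≤ |β - m| / ((m:ℝ) + 1) * (((m:ℝ) + 2) / ((m:ℝ) + 1)) := by positivity
    have key : |gb β (m+1)| * ((m:ℝ) + 1 + 1) * r ^ (m+1)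
        = (|gb β m| * ((m:ℝ) + 1) * r ^ m) * r *
          (|β - m| / ((m:ℝ) + 1) * (((m:ℝ) + 2) / ((m:ℝ) + 1))) := by
      rw [abs_gb_succ]
      have hm1 : ((m:ℝ) + 1) ≠ 0 := by positivity
      field_simp
      ring
    rw [Real.norm_eq_abs, Real.norm_eq_abs]
    have hnn : 0 ≤ |gb β m| * ((m:ℝ) + 1) * r ^ m := by positivity
    rw [abs_of_nonneg (by positivity), abs_of_nonneg hnn]
    push_cast
    rw [key]
    calc (|gb β m| * ((m:ℝ) + 1) * r ^ m) * r *
          (|β - m| / ((m:ℝ) + 1) * (((m:ℝ) + 2) / ((m:ℝ) + 1)))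
        ≤ (|gb β m| * ((m:ℝ) + 1) * r ^ m) * r * (r' / r) := by
          apply mul_le_mul_of_nonneg_left (le_of_lt hm) (by positivity)
      _ = r' * (|gb β m| * ((m:ℝ) + 1) * r ^ m) := by
          field_simp

lemma abs_gb_le_exp_term {β : ℝ} (hβ : 0 ≤ β) {m : ℕ} (hm : m ≤ Nat.floor β + 1) :
    |gb β m| ≤ β ^ m / (Nat.factorial m : ℝ) := by
  rw [gb, abs_div, abs_of_nonneg (by positivity : (0:ℝ) ≤ (Nat.factorial m : ℝ))]
  apply div_le_div_of_nonneg_right ?_ (by positivity)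
  · rw [Finset.abs_prod]
    calc ∏ i ∈ Finset.range m, |β - i| ≤ ∏ i ∈ Finset.range m, β := by
          apply Finset.prod_le_prod (fun i _ => abs_nonneg _)
          intro i hi
          have hi' : i ≤ Nat.floor β := by
            have := Finset.mem_range.mp hi
            omega
          have : (i : ℝ) ≤ β := le_trans (by exact_mod_cast hi' : (i:ℝ) ≤ (Nat.floor β : ℝ)) (Nat.floor_le hβ)
          rw [abs_of_nonneg (by linarith)]
          linarith
      _ = β ^ m := by rw [Finset.prod_const, Finset.card_range]

section tail
variable {β : ℝ}

lemma gb_telescope {m : ℕ} (hm : Nat.floor β + 1 ≤ m) :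
    β * |gb β m| = (m:ℝ) * |gb β m| - ((m:ℝ) + 1) * |gb β (m+1)| := by
  have hβm : β < (m : ℝ) := lt_of_lt_of_le (Nat.lt_floor_add_one β)
    (by exact_mod_cast hm)
  rw [abs_gb_succ, abs_of_nonpos (by linarith : β - (m:ℝ) ≤ 0)]
  have h1 : ((m:ℝ) + 1) ≠ 0 := by positivity
  field_simp
  ring

lemma gb_tail_partial_sum (N : ℕ) :
    ∑ i ∈ Finset.range N, β * |gb β (Nat.floor β + 1 + i)|
      ≤ (Nat.floor β + 1 : ℝ) * |gb β (Nat.floor β + 1)| := by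
  set M := Nat.floor β + 1 with hM
  have : ∀ i ∈ Finset.range N, β * |gb β (M + i)|
      = ((M + i : ℕ):ℝ) * |gb β (M + i)| - ((M + (i+1) : ℕ):ℝ) * |gb β (M + (i+1))| := by
    intro i _
    have := gb_telescope (β := β) (m := M + i) (by omega)
    push_cast at this ⊢
    rw [this]
    ring_nf
  rw [Finset.sum_congr rfl this, Finset.sum_range_sub' (fun i => ((M + i : ℕ):ℝ) * |gb β (M + i)|)]
  have : (0:ℝ) ≤ ((M + N : ℕ):ℝ) * |gb β (M + N)| := by positivity
  push_cast at this ⊢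
  have hMr : (M:ℝ) = ⌊β⌋₊ + 1 := by rw [hM]; push_cast; ring
  simp only [add_zero]
  rw [hMr] at this ⊢
  linarith

lemma summable_abs_gb_tail (hβ : 0 < β) :
    Summable (fun i : ℕ => |gb β (Nat.floor β + 1 + i)|) := by
  apply summable_of_sum_range_le (c := (Nat.floor β + 1 : ℝ) * |gb β (Nat.floor β + 1)| / β)
    (fun n => abs_nonneg _)
  intro n
  have h := gb_tail_partial_sum (β := β) n
  rw [← Finset.mul_sum] at h
  rw [le_div_iff₀ hβ]
  linarith

lemma tsum_abs_gb_tail_le (hβ : 0 < β) :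
    ∑' i : ℕ, |gb β (Nat.floor β + 1 + i)|
      ≤ (Nat.floor β + 1 : ℝ) * |gb β (Nat.floor β + 1)| / β := by
  apply Real.tsum_le_of_sum_range_le (fun n => abs_nonneg _)
  intro n
  have h := gb_tail_partial_sum (β := β) n
  rw [← Finset.mul_sum] at h
  rw [le_div_iff₀ hβ]
  linarith

end tail

lemma summable_abs_gb {β : ℝ} (hβ : 0 ≤ β) : Summable (fun m => |gb β m|) := by
  rcases eq_or_lt_of_le hβ with rfl | hβ
  · apply summable_of_ne_finset_zero (s := {0})
    intro m hm
    have : m ≠ 0 := by simpa using hm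
    obtain ⟨m', rfl⟩ := Nat.exists_eq_succ_of_ne_zero this
    simp [gb_nat_zero_succ]
  · have := summable_abs_gb_tail hβ
    rw [← summable_nat_add_iff (Nat.floor β + 1)]
    apply this.congr
    intro i
    rw [Nat.add_comm]

lemma tsum_abs_gb_le {β : ℝ} (hβ : 0 ≤ β) : ∑' m, |gb β m| ≤ 2 * Real.exp β := by
  rcases eq_or_lt_of_le hβ with rfl | hβ
  · have h1 : ∑' m, |gb (0:ℝ) m| = 1 := by
      rw [tsum_eq_single 0]
      · simp [gb_zero]
      · intro m hm
        obtain ⟨m', rfl⟩ := Nat.exists_eq_succ_of_ne_zero hm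
        simp [gb_nat_zero_succ]
    rw [h1]
    have := Real.exp_pos (0:ℝ)
    rw [Real.exp_zero]
    norm_num
  · set M := Nat.floor β + 1 with hM
    have hsum : Summable (fun m => |gb β m|) := summable_abs_gb hβ.le
    rw [← Summable.sum_add_tsum_nat_add M hsum]
    have hhead : ∑ i ∈ Finset.range M, |gb β i| ≤ Real.exp β := by
      calc ∑ i ∈ Finset.range M, |gb β i|
          ≤ ∑ i ∈ Finset.range M, β ^ i / (Nat.factorial i : ℝ) := by
            apply Finset.sum_le_sum
            intro i hi
            exact abs_gb_le_exp_term hβ.le (by have := Finset.mem_range.mp hi; omega)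
        _ ≤ Real.exp β := Real.sum_le_exp_of_nonneg hβ.le M
    have htail : ∑' i : ℕ, |gb β (i + M)| ≤ Real.exp β := by
      have h1 : ∑' i : ℕ, |gb β (i + M)| = ∑' i : ℕ, |gb β (M + i)| := by
        apply tsum_congr; intro i; rw [Nat.add_comm]
      rw [h1]
      refine le_trans (tsum_abs_gb_tail_le hβ) ?_
      rw [show ((Nat.floor β : ℝ) + 1) * |gb β (Nat.floor β + 1)| / β
          = (M:ℝ) * |gb β M| / β by rw [hM]; push_cast; ring]
      have hgbM : |gb β M| ≤ β ^ M / (Nat.factorial M : ℝ) :=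
        abs_gb_le_exp_term hβ.le le_rfl
      have hMfact : (Nat.factorial M : ℝ) = (M:ℝ) * (Nat.factorial (M-1) : ℝ) := by
        rw [hM]
        push_cast [Nat.factorial_succ]
        ring
      have hstep : (M:ℝ) * |gb β M| / β ≤ β ^ (M - 1) / (Nat.factorial (M-1) : ℝ) := by
        rw [div_le_iff₀ hβ]
        calc (M:ℝ) * |gb β M| ≤ (M:ℝ) * (β ^ M / (Nat.factorial M : ℝ)) := by
              apply mul_le_mul_of_nonneg_left hgbM (by positivity)
          _ = β ^ (M-1) / (Nat.factorial (M-1) : ℝ) * β := by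
              rw [hMfact]
              have hM1 : (M:ℝ) ≠ 0 := by rw [hM]; push_cast; positivity
              have : β ^ M = β ^ (M - 1) * β := by
                conv_lhs => rw [show M = (M-1) + 1 by omega]
                rw [pow_succ]
              rw [this]
              field_simp
      refine le_trans hstep ?_
      have hterm : β ^ (M-1) / (Nat.factorial (M-1) : ℝ) ≤ Real.exp β := by
        calc β ^ (M-1) / (Nat.factorial (M-1) : ℝ)
            ≤ ∑ i ∈ Finset.range M, β ^ i / (Nat.factorial i : ℝ) := by
              apply Finset.single_le_sum (f := fun i => β ^ i / (Nat.factorial i : ℝ))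
                (fun i _ => by positivity)
              exact Finset.mem_range.mpr (by omega)
          _ ≤ Real.exp β := Real.sum_le_exp_of_nonneg hβ.le M
      exact hterm
    linarith

lemma abs_gb_le_two_exp {β : ℝ} (hβ : 0 ≤ β) (m : ℕ) : |gb β m| ≤ 2 * Real.exp β :=
  le_trans (Summable.le_tsum (summable_abs_gb hβ) m (fun j _ => abs_nonneg _)) (tsum_abs_gb_le hβ)

lemma summable_gb_pow (β : ℝ) {x : ℝ} (hx : |x| < 1) :
    Summable (fun m : ℕ => gb β m * x ^ m) := by
  apply Summable.of_abs
  apply Summable.of_nonneg_of_le (fun m => abs_nonneg _) ?_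
    (summable_abs_gb_mul β (abs_nonneg x) hx)
  intro m
  rw [abs_mul, abs_pow]
  calc |gb β m| * |x| ^ m = |gb β m| * 1 * |x| ^ m := by ring
    _ ≤ |gb β m| * ((m:ℝ)+1) * |x| ^ m := by
        apply mul_le_mul_of_nonneg_right ?_ (pow_nonneg (abs_nonneg x) m)
        apply mul_le_mul_of_nonneg_left ?_ (abs_nonneg _)
        linarith [Nat.cast_nonneg (α := ℝ) m]

lemma summable_gb_deriv_bound (β : ℝ) {R : ℝ} (hR0 : 0 < R) (hR1 : R < 1) :
    Summable (fun m : ℕ => |gb β m| * m * R ^ (m - 1)) := by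
  apply Summable.of_nonneg_of_le (fun m => by positivity) ?_
    ((summable_abs_gb_mul β hR0.le hR1).mul_left (1/R))
  intro m
  rcases Nat.eq_zero_or_pos m with rfl | hm
  · simp
    positivity
  · have hpow : R ^ (m-1) = R ^ m / R := by
      rw [eq_div_iff hR0.ne', ← pow_succ]
      congr 1
      omega
    rw [hpow]
    have h1 : |gb β m| * (m:ℝ) * (R ^ m / R) = (|gb β m| * (m:ℝ) * R ^ m) / R := by ring
    rw [h1, div_le_iff₀ hR0]
    have h2 : 1/R * (|gb β m| * ((m:ℝ)+1) * R ^ m) * R = |gb β m| * ((m:ℝ)+1) * R ^ m := by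
      field_simp
    rw [h2]
    apply mul_le_mul_of_nonneg_right ?_ (pow_nonneg hR0.le m)
    apply mul_le_mul_of_nonneg_left ?_ (abs_nonneg _)
    linarith

lemma hasSum_gb_rpow_interior (β : ℝ) {x : ℝ} (hx : |x| < 1) :
    HasSum (fun m : ℕ => gb β m * x ^ m) ((1 + x) ^ β) := by
  set R := (|x| + 1) / 2 with hR
  have hxR : |x| < R := by rw [hR]; linarith
  have hR1 : R < 1 := by rw [hR]; linarith
  have hR0 : 0 < R := lt_of_le_of_lt (abs_nonneg x) hxR
  set tset : Set ℝ := Metric.ball (0:ℝ) R with htset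
  have hopen : IsOpen tset := Metric.isOpen_ball
  have hconn : IsPreconnected tset := (convex_ball (0:ℝ) R).isPreconnected
  have hmem : ∀ y ∈ tset, |y| < R := by
    intro y hy
    simpa [Real.norm_eq_abs] using mem_ball_zero_iff.mp hy
  have h0mem : (0:ℝ) ∈ tset := mem_ball_zero_iff.mpr (by simpa using hR0)
  have hxmem : x ∈ tset := mem_ball_zero_iff.mpr (by simpa [Real.norm_eq_abs] using hxR)
  have hpos : ∀ y ∈ tset, 0 < 1 + y := by
    intro y hy
    have := (abs_lt.mp (lt_trans (hmem y hy) hR1)).1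
    linarith
  -- summabilities
  have hu : Summable (fun m : ℕ => |gb β m| * m * R ^ (m-1)) := summable_gb_deriv_bound β hR0 hR1
  have hbound : ∀ (m : ℕ), ∀ y ∈ tset, ‖gb β m * ((m:ℝ) * y ^ (m-1))‖ ≤ |gb β m| * m * R ^ (m-1) := by
    intro m y hy
    rw [Real.norm_eq_abs, abs_mul, abs_mul, abs_pow, Nat.abs_cast, ← mul_assoc]
    apply mul_le_mul_of_nonneg_left _ (by positivity)
    exact pow_le_pow_left₀ (abs_nonneg y) (hmem y hy).le _
  have hsum0 : Summable (fun m : ℕ => gb β m * (0:ℝ) ^ m) := by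
    apply summable_of_ne_finset_zero (s := {0})
    intro m hm
    have : m ≠ 0 := by simpa using hm
    simp [zero_pow this]
  have hS_sum : ∀ y ∈ tset, Summable (fun m : ℕ => gb β m * y ^ m) :=
    fun y hy => summable_gb_pow β (lt_trans (hmem y hy) hR1)
  have hD_sum : ∀ y ∈ tset, Summable (fun m : ℕ => gb β m * ((m:ℝ) * y ^ (m-1))) := by
    intro y hy
    exact Summable.of_norm_bounded hu (fun m => hbound m y hy)
  have hM_sum : ∀ y ∈ tset, Summable (fun m : ℕ => gb β m * (m:ℝ) * y ^ m) := by
    intro y hy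
    apply Summable.of_abs
    apply Summable.of_nonneg_of_le (fun m => abs_nonneg _) ?_
      (summable_abs_gb_mul β (abs_nonneg y) (lt_trans (hmem y hy) hR1))
    intro m
    rw [abs_mul, abs_mul, abs_pow, Nat.abs_cast]
    have h1 : (m:ℝ) ≤ (m:ℝ) + 1 := by linarith
    have := pow_nonneg (abs_nonneg y) m
    nlinarith [abs_nonneg (gb β m)]
  -- the derivative of the sum
  have HD : ∀ y ∈ tset, HasDerivAt (fun z => ∑' m : ℕ, gb β m * z ^ m)
      (∑' m : ℕ, gb β m * ((m:ℝ) * y ^ (m-1))) y := by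
    intro y hy
    exact hasDerivAt_tsum_of_isPreconnected hu hopen hconn
      (fun m y _ => (hasDerivAt_pow m y).const_mul (gb β m)) hbound h0mem hsum0 hy
  -- the ODE
  have hODE : ∀ y ∈ tset, (1 + y) * (∑' m : ℕ, gb β m * ((m:ℝ) * y ^ (m-1)))
      = β * (∑' m : ℕ, gb β m * y ^ m) := by
    intro y hy
    have hshift_sum : Summable (fun m : ℕ => gb β (m+1) * (((m:ℝ)+1) * y ^ m)) := by
      have := (summable_nat_add_iff 1).mpr (hD_sum y hy)
      apply this.congr
      intro m
      push_cast
      norm_num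
    have hshift : (∑' m : ℕ, gb β m * ((m:ℝ) * y ^ (m-1)))
        = ∑' m : ℕ, gb β (m+1) * (((m:ℝ)+1) * y ^ m) := by
      rw [Summable.tsum_eq_zero_add (hD_sum y hy)]
      simp only [Nat.cast_zero, zero_mul, mul_zero, zero_add]
      apply tsum_congr
      intro m
      push_cast
      norm_num
    have hyD : y * (∑' m : ℕ, gb β (m+1) * (((m:ℝ)+1) * y ^ m))
        = ∑' m : ℕ, gb β m * (m:ℝ) * y ^ m := by
      rw [← tsum_mul_left, Summable.tsum_eq_zero_add (hM_sum y hy)]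
      simp only [Nat.cast_zero, mul_zero, zero_mul, zero_add]
      apply tsum_congr
      intro m
      push_cast
      ring
    rw [hshift, add_mul, one_mul, hyD]
    rw [← Summable.tsum_add hshift_sum (by
      apply (hM_sum y hy).congr
      intro m; ring)]
    rw [← tsum_mul_left]
    apply tsum_congr
    intro m
    have hgb : gb β (m+1) * ((m:ℝ)+1) = gb β m * (β - m) := by
      rw [gb_succ]
      have : ((m:ℝ)+1) ≠ 0 := by positivity
      field_simp
    calc gb β (m+1) * (((m:ℝ)+1) * y ^ m) + gb β m * (m:ℝ) * y ^ m
        = (gb β (m+1) * ((m:ℝ)+1)) * y ^ m + gb β m * (m:ℝ) * y ^ m := by ring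
      _ = (gb β m * (β - m)) * y ^ m + gb β m * (m:ℝ) * y ^ m := by rw [hgb]
      _ = β * (gb β m * y ^ m) := by ring
  -- φ has derivative zero
  have hφd : ∀ y ∈ tset, HasDerivAt
      (fun z => (∑' m : ℕ, gb β m * z ^ m) * (1 + z) ^ (-β)) 0 y := by
    intro y hy
    have h2 := Real.hasDerivAt_rpow_const (x := 1+y) (p := -β) (Or.inl (hpos y hy).ne')
    have h3 : HasDerivAt (fun z : ℝ => 1 + z) 1 y := (hasDerivAt_id y).const_add 1
    have h1 : HasDerivAt (fun z : ℝ => (1+z) ^ (-β)) (-β * (1+y) ^ (-β-1)) y := by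
      have := h2.comp y h3
      rw [mul_one] at this
      exact this
    have hmul := (HD y hy).mul h1
    refine hmul.congr_deriv ?_
    symm
    have key : (1+y) ^ (-β) = (1+y) ^ (-β-1) * (1+y) := by
      have hkey := Real.rpow_add_one (hpos y hy).ne' (-β-1)
      rw [show -β-1+1 = -β by ring] at hkey
      exact hkey
    rw [key]
    have hODEy := hODE y hy
    linear_combination (-(1+y) ^ (-β-1)) * hODEy
  -- constancy
  have habs : ∀ y, min 0 x ≤ y → y ≤ max 0 x → |y| ≤ |x| := by
    intro y h1 h2
    rw [abs_le]
    constructor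
    · have h3 : -|x| ≤ min 0 x := by
        rcases le_or_gt 0 x with h | h
        · rw [min_eq_left h]
          simp [abs_nonneg]
        · rw [min_eq_right h.le, abs_of_neg h]
          linarith
      linarith
    · have h3 : max 0 x ≤ |x| := by
        rcases le_or_gt 0 x with h | h
        · rw [max_eq_right h, abs_of_nonneg h]
        · rw [max_eq_left h.le]
          exact abs_nonneg x
      linarith
  have hsub : ∀ y, min 0 x ≤ y → y ≤ max 0 x → y ∈ tset := fun y h1 h2 =>
    mem_ball_zero_iff.mpr
      (by rw [Real.norm_eq_abs]; exact lt_of_le_of_lt (habs y h1 h2) hxR)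
  have hφconst : (∑' m : ℕ, gb β m * x ^ m) * (1 + x) ^ (-β)
      = (∑' m : ℕ, gb β m * (0:ℝ) ^ m) * (1 + (0:ℝ)) ^ (-β) := by
    rcases le_or_gt 0 x with hx0 | hx0
    · have hmem' : ∀ y ∈ Set.Icc (0:ℝ) x, y ∈ tset := fun y hy =>
        hsub y (le_trans (min_le_left 0 x) hy.1) (le_trans hy.2 (le_max_right 0 x))
      have hcont : ContinuousOn
          (fun z => (∑' m : ℕ, gb β m * z ^ m) * (1 + z) ^ (-β)) (Set.Icc 0 x) :=
        fun y hy => ((hφd y (hmem' y hy)).continuousAt).continuousWithinAt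
      exact constant_of_has_deriv_right_zero hcont
        (fun y hy => (hφd y (hmem' y (Set.Ico_subset_Icc_self hy))).hasDerivWithinAt)
        x (Set.right_mem_Icc.mpr hx0)
    · have hmem' : ∀ y ∈ Set.Icc x (0:ℝ), y ∈ tset := fun y hy =>
        hsub y (le_trans (min_le_right 0 x) hy.1) (le_trans hy.2 (le_max_left 0 x))
      have hcont : ContinuousOn
          (fun z => (∑' m : ℕ, gb β m * z ^ m) * (1 + z) ^ (-β)) (Set.Icc x 0) :=
        fun y hy => ((hφd y (hmem' y hy)).continuousAt).continuousWithinAt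
      have h := constant_of_has_deriv_right_zero hcont
        (fun y hy => (hφd y (hmem' y (Set.Ico_subset_Icc_self hy))).hasDerivWithinAt)
        0 (Set.right_mem_Icc.mpr hx0.le)
      -- h : φ 0 = φ x
      exact h.symm
  have hS0 : (∑' m : ℕ, gb β m * (0:ℝ) ^ m) = 1 := by
    rw [tsum_eq_single 0]
    · simp [gb_zero]
    · intro m hm
      simp [zero_pow hm]
  have h1x : 0 < 1 + x := hpos x hxmem
  have hcancel : (1+x) ^ (-β) * (1+x) ^ β = 1 := by
    rw [← Real.rpow_add h1x]
    simp
  rw [hS0, one_mul, show (1 + (0:ℝ)) = 1 by norm_num, Real.one_rpow] at hφconst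
  have hval : (∑' m : ℕ, gb β m * x ^ m) = (1+x) ^ β := by
    calc (∑' m : ℕ, gb β m * x ^ m)
        = (∑' m : ℕ, gb β m * x ^ m) * ((1+x) ^ (-β) * (1+x) ^ β) := by
          rw [hcancel, mul_one]
      _ = ((∑' m : ℕ, gb β m * x ^ m) * (1+x) ^ (-β)) * (1+x) ^ β := by ring
      _ = 1 * (1+x) ^ β := by rw [hφconst]
      _ = (1+x) ^ β := one_mul _
  exact (hS_sum x hxmem).hasSum_iff.mpr hval

lemma hasSum_gb_boundary {β : ℝ} (hβ : 0 < β) :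
    HasSum (fun m : ℕ => gb β m * (-1 : ℝ) ^ m) 0 := by
  have hsummable : Summable (fun m : ℕ => gb β m * (-1 : ℝ) ^ m) := by
    apply Summable.of_abs
    apply ((summable_abs_gb hβ.le).congr _).of_nonneg_of_le (fun m => abs_nonneg _)
      (fun m => le_rfl)
    intro m
    rw [abs_mul, abs_pow, abs_neg, abs_one, one_pow, mul_one]
  -- the sequence of points approaching -1
  set xs : ℕ → ℝ := fun n => 1 / ((n:ℝ) + 1) - 1 with hxs
  have hxabs : ∀ n, |xs n| < 1 := by
    intro n
    rw [hxs, abs_lt]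
    have h1 : 0 < (n:ℝ) + 1 := by positivity
    constructor
    · simp only
      have : 0 < 1 / ((n:ℝ) + 1) := by positivity
      linarith
    · simp only
      have : 1 / ((n:ℝ) + 1) ≤ 1 := by
        rw [div_le_one h1]
        linarith
      linarith
  have htend1 : Tendsto (fun n : ℕ => ∑' m : ℕ, gb β m * (xs n) ^ m) atTop
      (𝓝 (∑' m : ℕ, gb β m * (-1 : ℝ) ^ m)) := by
    apply tendsto_tsum_of_dominated_convergence (bound := fun m => |gb β m|)
      (summable_abs_gb hβ.le)
    · intro m
      apply Tendsto.const_mul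
      apply Tendsto.pow
      have : Tendsto (fun n : ℕ => 1 / ((n:ℝ) + 1)) atTop (𝓝 0) := by
        apply Tendsto.div_atTop tendsto_const_nhds
        exact tendsto_atTop_add_const_right _ _ tendsto_natCast_atTop_atTop
      have h2 := this.sub_const 1
      rw [zero_sub] at h2
      exact h2
    · filter_upwards with n
      intro m
      rw [Real.norm_eq_abs, abs_mul, abs_pow]
      calc |gb β m| * |xs n| ^ m ≤ |gb β m| * 1 ^ m := by
            apply mul_le_mul_of_nonneg_left ?_ (abs_nonneg _)
            exact pow_le_pow_left₀ (abs_nonneg _) (hxabs n).le m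
        _ = |gb β m| := by rw [one_pow, mul_one]
  have heval : ∀ n : ℕ, ∑' m : ℕ, gb β m * (xs n) ^ m = (1 / ((n:ℝ)+1)) ^ β := by
    intro n
    have h := (hasSum_gb_rpow_interior β (hxabs n)).tsum_eq
    rw [h]
    congr 1
    rw [hxs]
    ring
  have htend2 : Tendsto (fun n : ℕ => ∑' m : ℕ, gb β m * (xs n) ^ m) atTop (𝓝 0) := by
    simp only [heval]
    have h1 : Tendsto (fun n : ℕ => 1 / ((n:ℝ) + 1)) atTop (𝓝 0) := by
      apply Tendsto.div_atTop tendsto_const_nhds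
      exact tendsto_atTop_add_const_right _ _ tendsto_natCast_atTop_atTop
    have h2 : ContinuousAt (fun z : ℝ => z ^ β) 0 :=
      Real.continuousAt_rpow_const 0 β (Or.inr hβ.le)
    have h3 := (h2.tendsto.comp h1)
    rw [show ((0:ℝ) ^ β) = 0 from Real.zero_rpow hβ.ne'] at h3
    exact h3
  have : ∑' m : ℕ, gb β m * (-1 : ℝ) ^ m = 0 := tendsto_nhds_unique htend1 htend2
  exact hsummable.hasSum_iff.mpr this

/-- The generalized binomial theorem for `(1-s)^β`, `β ≥ 0`, `s ∈ [0,1]`. -/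
lemma binom_hasSum {β : ℝ} (hβ : 0 ≤ β) {s : ℝ} (hs0 : 0 ≤ s) (hs1 : s ≤ 1) :
    HasSum (fun m : ℕ => gb β m * (-s) ^ m) ((1 - s) ^ β) := by
  rcases lt_or_eq_of_le hs1 with hs | rfl
  · have hx : |(-s)| < 1 := by rw [abs_neg, abs_of_nonneg hs0]; exact hs
    have h := hasSum_gb_rpow_interior β hx
    rw [show (1 + -s) = 1 - s by ring] at h
    exact h
  · rcases eq_or_lt_of_le hβ with rfl | hβ'
    · have h0 : ((1:ℝ) - 1) ^ (0:ℝ) = 1 := by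
        rw [sub_self, Real.rpow_zero]
      rw [h0]
      have h := hasSum_single (f := fun m : ℕ => gb 0 m * (-(1:ℝ)) ^ m) 0 ?_
      · simpa [gb_zero] using h
      · intro m hm
        obtain ⟨m', rfl⟩ := Nat.exists_eq_succ_of_ne_zero hm
        simp [gb_nat_zero_succ]
    · have h0 : ((1:ℝ) - 1) ^ β = 0 := by
        rw [sub_self, Real.zero_rpow hβ'.ne']
      rw [h0]
      exact hasSum_gb_boundary hβ'

/-- Multinomial expansion with factorial weights. -/
lemma multinomial_div {k : ℕ} (w : Fin k → ℝ) (m : ℕ) :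
    ∑ x ∈ Finset.piAntidiag Finset.univ m, (∏ j, w j ^ x j / (Nat.factorial (x j) : ℝ))
      = (∑ j, w j) ^ m / (Nat.factorial m : ℝ) := by
  rw [Finset.sum_pow_eq_sum_piAntidiag, Finset.sum_div]
  apply Finset.sum_congr rfl
  intro x hx
  have hsum : ∑ j, x j = m := (Finset.mem_piAntidiag.mp hx).1
  have spec : ((∏ j, Nat.factorial (x j) : ℕ) : ℝ) * ((Nat.multinomial Finset.univ x : ℕ) : ℝ)
      = ((Nat.factorial m : ℕ) : ℝ) := by
    rw [← Nat.cast_mul, Nat.multinomial_spec, hsum]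
  rw [Finset.prod_div_distrib]
  have hfac : (0:ℝ) < ∏ j, (Nat.factorial (x j) : ℝ) := by positivity
  have hm : (0:ℝ) < (Nat.factorial m : ℝ) := by positivity
  rw [div_eq_div_iff hfac.ne' hm.ne']
  push_cast at spec
  calc (∏ j, w j ^ x j) * (Nat.factorial m : ℝ)
      = (∏ j, w j ^ x j) * ((∏ j, (Nat.factorial (x j) : ℝ)) * (Nat.multinomial Finset.univ x : ℝ)) := by
        rw [spec]
    _ = (Nat.multinomial Finset.univ x : ℝ) * (∏ j, w j ^ x j) * ∏ j, (Nat.factorial (x j) : ℝ) := by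
        ring

noncomputable def Tterm (α : ℝ) (k : ℕ) (lam : Fin k → ℝ) (t : ℝ) (r : ℕ) (x : Fin k → ℕ) : ℝ :=
  (-(t * (∑ j, lam j) ^ α)) ^ r / (Nat.factorial r : ℝ) *
    (Real.Gamma (α * r + 1) / Real.Gamma (α * r - (∑ j, (x j : ℝ)) + 1)) *
    ∏ j, (-(lam j) / ∑ i, lam i) ^ (x j) / (Nat.factorial (x j) : ℝ)

noncomputable def Fterm (α : ℝ) (k : ℕ) (lam : Fin k → ℝ) (t u : ℝ)
    (p : ℕ × (Fin k → ℕ)) : ℝ :=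
  Tterm α k lam t p.1 p.2 * u ^ (∑ j, (j.1 + 1) * p.2 j)

lemma gsfcpPMF_eq (α : ℝ) (k : ℕ) (lam : Fin k → ℝ) (t : ℝ) (n : ℕ) :
    gsfcpPMF α k lam t n = ∑' x : Fin k → ℕ,
      if (∑ j, (j.1 + 1) * x j) = n then ∑' r : ℕ, Tterm α k lam t r x else 0 := rfl

lemma hasSum_fiber_msum {k : ℕ} (G : (Fin k → ℕ) → ℝ) (m : ℕ) :
    HasSum (fun x : {x : Fin k → ℕ // ∑ j, x j = m} => G x.1)
      (∑ x ∈ Finset.piAntidiag Finset.univ m, G x) := by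
  classical
  have h := (Finset.piAntidiag (Finset.univ : Finset (Fin k)) m).hasSum G
  let e : {x : Fin k → ℕ // ∑ j, x j = m} ≃ {x // x ∈ Finset.piAntidiag Finset.univ m} :=
    Equiv.subtypeEquivRight (fun x => by simp [Finset.mem_piAntidiag])
  have h2 := (e.hasSum_iff).mpr h
  have hfe : (fun x : {x : Fin k → ℕ // ∑ j, x j = m} => G x.1) = (G ∘ Subtype.val) ∘ ⇑e := by
    funext x
    rfl
  rw [hfe]
  exact h2

section mainpos

variable {α : ℝ} {k : ℕ} {lam : Fin k → ℝ} {t u : ℝ}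

lemma main_pos (hα0 : 0 < α) (hk : 0 < k) (hlam : ∀ j, 0 < lam j)
    (ht : 0 ≤ t) (hu0 : 0 ≤ u) (hu1 : u ≤ 1) :
    (∀ x : Fin k → ℕ, Summable (fun r : ℕ => Tterm α k lam t r x)) ∧
      HasSum (fun n : ℕ => u ^ n * gsfcpPMF α k lam t n)
        (Real.exp (-(t * (∑ j, lam j * (1 - u ^ (j.1 + 1))) ^ α))) := by
  classical
  have hne : Nonempty (Fin k) := ⟨⟨0, hk⟩⟩
  set L := ∑ j, lam j with hLdef
  have hL0 : 0 < L := Finset.sum_pos (fun j _ => hlam j) Finset.univ_nonempty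
  set q : Fin k → ℝ := fun j => lam j / L with hqdef
  have hq0 : ∀ j, 0 ≤ q j := fun j => div_nonneg (hlam j).le hL0.le
  have hq1 : ∑ j, q j = 1 := by
    simp only [hqdef]
    rw [← Finset.sum_div, ← hLdef, div_self hL0.ne']
  set s := ∑ j, q j * u ^ (j.1 + 1) with hsdef
  have hs0 : 0 ≤ s :=
    Finset.sum_nonneg (fun j _ => mul_nonneg (hq0 j) (pow_nonneg hu0 _))
  have hs1 : s ≤ 1 := by
    calc s ≤ ∑ j, q j := Finset.sum_le_sum
          (fun j _ => mul_le_of_le_one_right (hq0 j) (pow_le_one₀ hu0 hu1))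
      _ = 1 := hq1
  have hs1' : (0:ℝ) ≤ 1 - s := by linarith
  set c : ℕ → ℝ := fun r => (-(t * L ^ α)) ^ r / (Nat.factorial r : ℝ) with hcdef
  have htL : 0 ≤ t * L ^ α := mul_nonneg ht (Real.rpow_nonneg hL0.le α)
  have habsc : ∀ r : ℕ, |c r| = (t * L ^ α) ^ r / (Nat.factorial r : ℝ) := by
    intro r
    simp only [hcdef]
    rw [abs_div, abs_pow, abs_neg, abs_of_nonneg htL,
      abs_of_nonneg (by positivity : (0:ℝ) ≤ (Nat.factorial r : ℝ))]
  have hβ : ∀ r : ℕ, 0 ≤ α * r := fun r => by positivity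
  -- pointwise rewriting of Tterm
  have hTeq : ∀ (r : ℕ) (x : Fin k → ℕ),
      Tterm α k lam t r x = c r * (gb (α * r) (∑ j, x j) * (Nat.factorial (∑ j, x j) : ℝ)) *
        ∏ j, ((-(q j)) ^ x j / (Nat.factorial (x j) : ℝ)) := by
    intro r x
    have hmcast : (∑ j, ((x j : ℝ))) = ((∑ j, x j : ℕ) : ℝ) := by push_cast; rfl
    unfold Tterm
    rw [← hLdef, hmcast, gb_eq_gamma_ratio (α * r) (hβ r) (∑ j, x j)]
    simp only [hcdef, hqdef]
    congr 1
    apply Finset.prod_congr rfl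
    intro j _
    rw [neg_div]
  -- pointwise rewriting of Fterm
  have hFeq : ∀ (r : ℕ) (x : Fin k → ℕ),
      Fterm α k lam t u (r, x)
        = c r * (gb (α * r) (∑ j, x j) * (Nat.factorial (∑ j, x j) : ℝ)) *
          ∏ j, ((-(q j) * u ^ (j.1 + 1)) ^ x j / (Nat.factorial (x j) : ℝ)) := by
    intro r x
    unfold Fterm
    rw [hTeq r x]
    simp only
    rw [mul_assoc]
    congr 1
    rw [← Finset.prod_pow_eq_pow_sum, ← Finset.prod_mul_distrib]
    apply Finset.prod_congr rfl
    intro j _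
    rw [pow_mul, mul_pow]
    ring
  have hFabs : ∀ (r : ℕ) (x : Fin k → ℕ),
      |Fterm α k lam t u (r, x)|
        = |c r| * (|gb (α * r) (∑ j, x j)| * (Nat.factorial (∑ j, x j) : ℝ)) *
          ∏ j, ((q j * u ^ (j.1 + 1)) ^ x j / (Nat.factorial (x j) : ℝ)) := by
    intro r x
    rw [hFeq r x, abs_mul, abs_mul, abs_mul, Finset.abs_prod,
      abs_of_nonneg (by positivity : (0:ℝ) ≤ (Nat.factorial (∑ j, x j) : ℝ))]
    congr 1
    apply Finset.prod_congr rfl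
    intro j _
    rw [abs_div, abs_pow, abs_of_nonneg (by positivity : (0:ℝ) ≤ (Nat.factorial (x j) : ℝ)),
      abs_mul, abs_neg, abs_of_nonneg (hq0 j), abs_of_nonneg (pow_nonneg hu0 _)]
  have hw : ∑ j, (-(q j) * u ^ (j.1 + 1)) = -s := by
    rw [hsdef, ← Finset.sum_neg_distrib]
    apply Finset.sum_congr rfl
    intro j _
    ring
  have hw' : ∑ j, (q j * u ^ (j.1 + 1)) = s := hsdef.symm
  -- fiber sums for fixed r
  have hfib : ∀ (r m : ℕ),
      HasSum (fun x : {x : Fin k → ℕ // ∑ j, x j = m} => Fterm α k lam t u (r, x.1))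
        (c r * gb (α * r) m * (-s) ^ m) := by
    intro r m
    have h := hasSum_fiber_msum (fun x => Fterm α k lam t u (r, x)) m
    have hsum_eq : ∑ x ∈ Finset.piAntidiag Finset.univ m, Fterm α k lam t u (r, x)
        = c r * gb (α * r) m * (-s) ^ m := by
      have h1 : ∀ x ∈ Finset.piAntidiag Finset.univ m,
          Fterm α k lam t u (r, x) = c r * (gb (α * r) m * (Nat.factorial m : ℝ)) *
            ∏ j, ((-(q j) * u ^ (j.1 + 1)) ^ x j / (Nat.factorial (x j) : ℝ)) := by
        intro x hx
        have hm : ∑ j, x j = m := (Finset.mem_piAntidiag.mp hx).1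
        rw [hFeq r x, hm]
      rw [Finset.sum_congr rfl h1, ← Finset.mul_sum, multinomial_div, hw]
      have hfac : (0:ℝ) < (Nat.factorial m : ℝ) := by positivity
      field_simp
    rw [hsum_eq] at h
    exact h
  have habsfib : ∀ (r m : ℕ),
      HasSum (fun x : {x : Fin k → ℕ // ∑ j, x j = m} => |Fterm α k lam t u (r, x.1)|)
        (|c r| * |gb (α * r) m| * s ^ m) := by
    intro r m
    have h := hasSum_fiber_msum (fun x => |Fterm α k lam t u (r, x)|) m
    have hsum_eq : ∑ x ∈ Finset.piAntidiag Finset.univ m, |Fterm α k lam t u (r, x)|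
        = |c r| * |gb (α * r) m| * s ^ m := by
      have h1 : ∀ x ∈ Finset.piAntidiag Finset.univ m,
          |Fterm α k lam t u (r, x)| = |c r| * (|gb (α * r) m| * (Nat.factorial m : ℝ)) *
            ∏ j, ((q j * u ^ (j.1 + 1)) ^ x j / (Nat.factorial (x j) : ℝ)) := by
        intro x hx
        have hm : ∑ j, x j = m := (Finset.mem_piAntidiag.mp hx).1
        rw [hFabs r x, hm]
      rw [Finset.sum_congr rfl h1, ← Finset.mul_sum, multinomial_div, hw']
      have hfac : (0:ℝ) < (Nat.factorial m : ℝ) := by positivity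
      field_simp
    rw [hsum_eq] at h
    exact h
  -- summability over x for each r
  have habs_sum_x : ∀ r : ℕ, Summable (fun x : Fin k → ℕ => |Fterm α k lam t u (r, x)|) := by
    intro r
    rw [← (Equiv.sigmaFiberEquiv (fun x : Fin k → ℕ => ∑ j, x j)).summable_iff]
    apply (summable_sigma_of_nonneg (fun p => abs_nonneg _)).mpr
    constructor
    · intro m
      exact (habsfib r m).summable
    · apply Summable.congr (f := fun m => |c r| * |gb (α * r) m| * s ^ m) ?_
        (fun m => ((habsfib r m).tsum_eq).symm)
      apply Summable.of_nonneg_of_le (fun m => by positivity) ?_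
        ((summable_abs_gb (hβ r)).mul_left (|c r|))
      intro m
      calc |c r| * |gb (α * r) m| * s ^ m ≤ |c r| * |gb (α * r) m| * 1 := by
            apply mul_le_mul_of_nonneg_left (pow_le_one₀ hs0 hs1) (by positivity)
        _ = |c r| * |gb (α * r) m| := mul_one _
  have hsum_x : ∀ r : ℕ, Summable (fun x : Fin k → ℕ => Fterm α k lam t u (r, x)) :=
    fun r => summable_abs_iff.mp (habs_sum_x r)
  -- per-r total sum
  have hhasr : ∀ r : ℕ, HasSum (fun x : Fin k → ℕ => Fterm α k lam t u (r, x))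
      (c r * (1 - s) ^ (α * r)) := by
    intro r
    have hbin := (binom_hasSum (hβ r) hs0 hs1).mul_left (c r)
    have hfun : (fun m => c r * (gb (α * r) m * (-s) ^ m))
        = fun m => c r * gb (α * r) m * (-s) ^ m := by
      funext m
      ring
    rw [hfun] at hbin
    rw [← (Equiv.sigmaFiberEquiv (fun x : Fin k → ℕ => ∑ j, x j)).hasSum_iff]
    exact HasSum.sigma_of_hasSum hbin (fun m => hfib r m)
      ((Equiv.sigmaFiberEquiv _).summable_iff.mpr (hsum_x r))
  -- the exponential series
  have hEsum : HasSum (fun r : ℕ => c r * (1 - s) ^ (α * r))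
      (Real.exp (-(t * L ^ α) * (1 - s) ^ α)) := by
    have h1 := NormedSpace.expSeries_div_hasSum_exp (-(t * L ^ α) * (1 - s) ^ α)
    rw [← Real.exp_eq_exp_ℝ] at h1
    have h2 : ∀ r : ℕ, (-(t * L ^ α) * (1 - s) ^ α) ^ r / (Nat.factorial r : ℝ)
        = c r * (1 - s) ^ (α * r) := by
      intro r
      rw [mul_pow, ← Real.rpow_natCast ((1 - s) ^ α) r, ← Real.rpow_mul hs1']
      simp only [hcdef]
      ring
    simp only [h2] at h1
    exact h1
  -- total summability
  have htotal_abs : Summable (fun p : ℕ × (Fin k → ℕ) => |Fterm α k lam t u p|) := by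
    apply (summable_prod_of_nonneg (fun p => abs_nonneg _)).mpr
    refine ⟨fun r => habs_sum_x r, ?_⟩
    have hval : ∀ r : ℕ, (∑' x : Fin k → ℕ, |Fterm α k lam t u (r, x)|)
        ≤ |c r| * (2 * Real.exp (α * r)) := by
      intro r
      have hsig : Summable ((fun x => |Fterm α k lam t u (r, x)|) ∘
          ⇑(Equiv.sigmaFiberEquiv (fun x : Fin k → ℕ => ∑ j, x j))) :=
        (Equiv.sigmaFiberEquiv _).summable_iff.mpr (habs_sum_x r)
      have hstep : (∑' x : Fin k → ℕ, |Fterm α k lam t u (r, x)|)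
          = ∑' (m : ℕ), ∑' (x : {x : Fin k → ℕ // ∑ j, x j = m}),
              |Fterm α k lam t u (r, x.1)| := by
        rw [← (Equiv.sigmaFiberEquiv (fun x : Fin k → ℕ => ∑ j, x j)).tsum_eq
          (fun x : Fin k → ℕ => |Fterm α k lam t u (r, x)|)]
        exact Summable.tsum_sigma hsig
      rw [hstep]
      calc (∑' (m : ℕ), ∑' (x : {x : Fin k → ℕ // ∑ j, x j = m}), |Fterm α k lam t u (r, x.1)|)
          = ∑' (m : ℕ), |c r| * |gb (α * r) m| * s ^ m :=
            tsum_congr (fun m => (habsfib r m).tsum_eq)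
        _ ≤ ∑' (m : ℕ), |c r| * |gb (α * r) m| := by
            apply Summable.tsum_le_tsum ?_ ?_ ((summable_abs_gb (hβ r)).mul_left (|c r|))
            · intro m
              calc |c r| * |gb (α * r) m| * s ^ m ≤ |c r| * |gb (α * r) m| * 1 := by
                    apply mul_le_mul_of_nonneg_left (pow_le_one₀ hs0 hs1) (by positivity)
                _ = |c r| * |gb (α * r) m| := mul_one _
            · apply Summable.of_nonneg_of_le (fun m => by positivity) ?_
                ((summable_abs_gb (hβ r)).mul_left (|c r|))
              intro m
              calc |c r| * |gb (α * r) m| * s ^ m ≤ |c r| * |gb (α * r) m| * 1 := by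
                    apply mul_le_mul_of_nonneg_left (pow_le_one₀ hs0 hs1) (by positivity)
                _ = |c r| * |gb (α * r) m| := mul_one _
        _ = |c r| * ∑' (m : ℕ), |gb (α * r) m| := tsum_mul_left
        _ ≤ |c r| * (2 * Real.exp (α * r)) :=
            mul_le_mul_of_nonneg_left (tsum_abs_gb_le (hβ r)) (abs_nonneg _)
    apply Summable.of_nonneg_of_le
      (fun r => tsum_nonneg (fun x => abs_nonneg _)) hval
    have hexp : Summable (fun r : ℕ => (t * L ^ α * Real.exp α) ^ r / (Nat.factorial r : ℝ)) :=
      NormedSpace.expSeries_div_summable (t * L ^ α * Real.exp α)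
    apply ((hexp.mul_left 2).congr ?_)
    intro r
    rw [habsc r, mul_comm α (r:ℝ), Real.exp_nat_mul, mul_pow]
    ring
  have htotal : Summable (fun p : ℕ × (Fin k → ℕ) => Fterm α k lam t u p) :=
    summable_abs_iff.mp htotal_abs
  -- total HasSum over pairs
  have hFtotal : HasSum (fun p : ℕ × (Fin k → ℕ) => Fterm α k lam t u p)
      (Real.exp (-(t * L ^ α) * (1 - s) ^ α)) := by
    rw [← (Equiv.sigmaEquivProd ℕ (Fin k → ℕ)).hasSum_iff]
    exact HasSum.sigma_of_hasSum hEsum (fun r => hhasr r)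
      ((Equiv.sigmaEquivProd ℕ (Fin k → ℕ)).summable_iff.mpr htotal)
  -- conjunct 1 : summability in r for fixed x
  have hconj : ∀ x : Fin k → ℕ, Summable (fun r : ℕ => Tterm α k lam t r x) := by
    intro x
    apply summable_abs_iff.mp
    set m := ∑ j, x j with hmdef
    set P := ∏ j, ((-(q j)) ^ x j / (Nat.factorial (x j) : ℝ)) with hPdef
    have hexp : Summable (fun r : ℕ => (t * L ^ α * Real.exp α) ^ r / (Nat.factorial r : ℝ)) :=
      NormedSpace.expSeries_div_summable (t * L ^ α * Real.exp α)
    apply Summable.of_nonneg_of_le (fun r => abs_nonneg _) ?_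
      (hexp.mul_left (2 * (Nat.factorial m : ℝ) * |P|))
    intro r
    rw [hTeq r x, ← hmdef, ← hPdef]
    rw [abs_mul, abs_mul, abs_mul,
      abs_of_nonneg (by positivity : (0:ℝ) ≤ (Nat.factorial m : ℝ))]
    calc |c r| * (|gb (α * r) m| * (Nat.factorial m : ℝ)) * |P|
        ≤ |c r| * (2 * Real.exp (α * r) * (Nat.factorial m : ℝ)) * |P| := by
          apply mul_le_mul_of_nonneg_right ?_ (abs_nonneg _)
          apply mul_le_mul_of_nonneg_left ?_ (abs_nonneg _)
          apply mul_le_mul_of_nonneg_right (abs_gb_le_two_exp (hβ r) m) (by positivity)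
      _ = 2 * (Nat.factorial m : ℝ) * |P| * ((t * L ^ α * Real.exp α) ^ r / (Nat.factorial r : ℝ)) := by
          rw [habsc r, mul_comm α (r:ℝ), Real.exp_nat_mul, mul_pow]
          ring
  -- regroup by n
  have hregroup := hFtotal.tsum_fiberwise (fun p : ℕ × (Fin k → ℕ) => ∑ j, (j.1 + 1) * p.2 j)
  have hfibeq : ∀ n : ℕ,
      (∑' p : ↑((fun p : ℕ × (Fin k → ℕ) => ∑ j, (j.1 + 1) * p.2 j) ⁻¹' {n}),
          Fterm α k lam t u ↑p)
        = u ^ n * gsfcpPMF α k lam t n := by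
    intro n
    let en : ↑((fun p : ℕ × (Fin k → ℕ) => ∑ j, (j.1 + 1) * p.2 j) ⁻¹' {n})
        ≃ ({x : Fin k → ℕ // (∑ j, (j.1 + 1) * x j) = n} × ℕ) :=
      { toFun := fun p => (⟨p.1.2, p.2⟩, p.1.1)
        invFun := fun z => ⟨(z.2, z.1.1), z.1.2⟩
        left_inv := fun p => rfl
        right_inv := fun z => rfl }
    have he1 : (∑' p : ↑((fun p : ℕ × (Fin k → ℕ) => ∑ j, (j.1 + 1) * p.2 j) ⁻¹' {n}),
        Fterm α k lam t u ↑p)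
        = ∑' z : ({x : Fin k → ℕ // (∑ j, (j.1 + 1) * x j) = n} × ℕ),
            Fterm α k lam t u (z.2, z.1.1) :=
      (en.symm.tsum_eq (fun p => Fterm α k lam t u ↑p)).symm
    have hsum_z : Summable (fun z : ({x : Fin k → ℕ // (∑ j, (j.1 + 1) * x j) = n} × ℕ) =>
        Fterm α k lam t u (z.2, z.1.1)) := by
      apply htotal.comp_injective
      intro a b hab
      rcases a with ⟨⟨xa, ha⟩, ra⟩
      rcases b with ⟨⟨xb, hb⟩, rb⟩
      simp only [Prod.mk.injEq] at hab
      obtain ⟨h1, h2⟩ := hab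
      subst h1
      simp only [Prod.mk.injEq, Subtype.mk.injEq]
      exact ⟨h2, trivial⟩
    have hsum_r : ∀ b : {x : Fin k → ℕ // (∑ j, (j.1 + 1) * x j) = n},
        Summable (fun r : ℕ => Fterm α k lam t u (r, b.1)) := by
      intro b
      apply htotal.comp_injective
      intro a1 a2 h
      simpa using congrArg Prod.fst h
    rw [he1, Summable.tsum_prod' hsum_z hsum_r]
    have hinner : ∀ b : {x : Fin k → ℕ // (∑ j, (j.1 + 1) * x j) = n},
        (∑' r : ℕ, Fterm α k lam t u (r, b.1))
          = u ^ n * ∑' r : ℕ, Tterm α k lam t r b.1 := by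
      intro b
      rw [← tsum_mul_left]
      apply tsum_congr
      intro r
      unfold Fterm
      rw [show (∑ j, (j.1 + 1) * b.1 j) = n from b.2]
      ring
    rw [tsum_congr hinner, tsum_mul_left]
    congr 1
    rw [gsfcpPMF_eq]
    have hsub : (∑' b : {x : Fin k → ℕ // (∑ j, (j.1 + 1) * x j) = n},
          ∑' r : ℕ, Tterm α k lam t r b.1)
        = ∑' x : Fin k → ℕ, Set.indicator {x : Fin k → ℕ | (∑ j, (j.1 + 1) * x j) = n}
            (fun x => ∑' r : ℕ, Tterm α k lam t r x) x :=
      _root_.tsum_subtype {x : Fin k → ℕ | (∑ j, (j.1 + 1) * x j) = n}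
        (fun x => ∑' r : ℕ, Tterm α k lam t r x)
    rw [hsub]
    apply tsum_congr
    intro x
    rw [Set.indicator_apply]
    simp only [Set.mem_setOf_eq]
  simp only [hfibeq] at hregroup
  -- final value identification
  have hLs : (∑ j, lam j * (1 - u ^ (j.1 + 1))) = L * (1 - s) := by
    have hLq : ∀ j, L * (q j * u ^ (j.1 + 1)) = lam j * u ^ (j.1 + 1) := by
      intro j
      simp only [hqdef]
      field_simp
    calc ∑ j, lam j * (1 - u ^ (j.1 + 1))
        = ∑ j, (lam j - lam j * u ^ (j.1 + 1)) := by
          apply Finset.sum_congr rfl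
          intro j _
          ring
      _ = (∑ j, lam j) - ∑ j, lam j * u ^ (j.1 + 1) := Finset.sum_sub_distrib _ _
      _ = L - ∑ j, L * (q j * u ^ (j.1 + 1)) := by
          rw [← hLdef]
          congr 1
          exact (Finset.sum_congr rfl (fun j _ => hLq j)).symm
      _ = L - L * ∑ j, (q j * u ^ (j.1 + 1)) := by rw [Finset.mul_sum]
      _ = L * (1 - s) := by
          rw [← hsdef]
          ring
  have hexp_eq : Real.exp (-(t * L ^ α) * (1 - s) ^ α)
      = Real.exp (-(t * (∑ j, lam j * (1 - u ^ (j.1 + 1))) ^ α)) := by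
    rw [hLs, Real.mul_rpow hL0.le hs1']
    ring_nf
  rw [hexp_eq] at hregroup
  exact ⟨hconj, hregroup⟩

end mainpos

section mainzero

variable {α : ℝ} {lam : Fin 0 → ℝ} {t u : ℝ}

lemma main_zero (hα0 : 0 < α) (ht : 0 ≤ t) :
    (∀ x : Fin 0 → ℕ, Summable (fun r : ℕ => Tterm α 0 lam t r x)) ∧
      HasSum (fun n : ℕ => u ^ n * gsfcpPMF α 0 lam t n)
        (Real.exp (-(t * (∑ j, lam j * (1 - u ^ (j.1 + 1))) ^ α))) := by
  classical
  have hL : (∑ j, lam j) = 0 := by simp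
  have hzero : (-(t * (∑ j, lam j) ^ α)) = 0 := by
    rw [hL, Real.zero_rpow hα0.ne']
    ring
  have hT0 : ∀ (r : ℕ) (x : Fin 0 → ℕ), r ≠ 0 → Tterm α 0 lam t r x = 0 := by
    intro r x hr
    unfold Tterm
    rw [hzero, zero_pow hr]
    simp
  have hTzero : ∀ x : Fin 0 → ℕ, Tterm α 0 lam t 0 x = 1 := by
    intro x
    unfold Tterm
    rw [hzero]
    simp [Real.Gamma_one]
  have hconj : ∀ x : Fin 0 → ℕ, Summable (fun r : ℕ => Tterm α 0 lam t r x) := by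
    intro x
    apply summable_of_ne_finset_zero (s := {0})
    intro r hr
    exact hT0 r x (by simpa using hr)
  have hinner : ∀ x : Fin 0 → ℕ, (∑' r : ℕ, Tterm α 0 lam t r x) = 1 := by
    intro x
    rw [tsum_eq_single 0 (fun r hr => hT0 r x hr), hTzero]
  have hpmf : ∀ n : ℕ, gsfcpPMF α 0 lam t n = if 0 = n then 1 else 0 := by
    intro n
    rw [gsfcpPMF_eq]
    rw [tsum_eq_single (fun j => j.elim0) (fun b hb =>
      absurd (Subsingleton.elim b (fun j => j.elim0)) hb)]
    simp only [Finset.univ_eq_empty, Finset.sum_empty]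
    rw [hinner]
  have hhs : HasSum (fun n : ℕ => u ^ n * gsfcpPMF α 0 lam t n) 1 := by
    have h := hasSum_single (f := fun n : ℕ => u ^ n * gsfcpPMF α 0 lam t n) 0 ?_
    · have h0 : u ^ 0 * gsfcpPMF α 0 lam t 0 = 1 := by
        rw [hpmf]
        simp
      rwa [h0] at h
    · intro b hb
      rw [hpmf, if_neg (fun h => hb h.symm)]
      ring
  have hval : Real.exp (-(t * (∑ j, lam j * (1 - u ^ (j.1 + 1))) ^ α)) = 1 := by
    simp [Real.zero_rpow hα0.ne']
  refine ⟨hconj, ?_⟩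
  rw [hval]
  exact hhs

end mainzero

end GsfcpAux

/-- Pgf of the generalized space fractional counting process:
`exp(-t·(∑_j λ_j(1-u^j))^α) = ∑_{n≥0} u^n p^α(n,t)`. -/
theorem gsfcp_pgf (α : ℝ) (hα0 : 0 < α) (hα1 : α < 1)
    (k : ℕ) (lam : Fin k → ℝ) (hlam : ∀ j, 0 < lam j)
    (t : ℝ) (ht : 0 ≤ t) (u : ℝ) (hu0 : 0 ≤ u) (hu1 : u ≤ 1) :
    (∀ n : ℕ, ∀ x : Fin k → ℕ,
      Summable (fun r : ℕ => (-(t * (∑ j, lam j) ^ α)) ^ r / (Nat.factorial r : ℝ) *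
        (Real.Gamma (α * r + 1) / Real.Gamma (α * r - (∑ j, (x j : ℝ)) + 1)) *
        ∏ j, (-(lam j) / ∑ i, lam i) ^ (x j) / (Nat.factorial (x j) : ℝ))) ∧
    Summable (fun n : ℕ => u ^ n * gsfcpPMF α k lam t n) ∧
    Real.exp (-(t * (∑ j, lam j * (1 - u ^ (j.1 + 1))) ^ α)) =
      ∑' n : ℕ, u ^ n * gsfcpPMF α k lam t n := by
  classical
  have master : (∀ x : Fin k → ℕ, Summable (fun r : ℕ => GsfcpAux.Tterm α k lam t r x)) ∧
      HasSum (fun n : ℕ => u ^ n * gsfcpPMF α k lam t n)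
        (Real.exp (-(t * (∑ j, lam j * (1 - u ^ (j.1 + 1))) ^ α))) := by
    rcases Nat.eq_zero_or_pos k with hk | hk
    · subst hk
      exact GsfcpAux.main_zero hα0 ht
    · exact GsfcpAux.main_pos hα0 hk hlam ht hu0 hu1
  exact ⟨fun n x => master.1 x, master.2.summable, master.2.tsum_eq.symm⟩
end

section
/- Let β ∈ (0,1], λ₁,…,λ_k > 0, λ = ∑_{j=1}^{k} λ_j, t ≥ 0, and u ∈ ℝ with |u| ≤ 1. Then E_{β,1}(-t^β·∑_{j=1}^{k} λ_j(1-u^j)) = ∑_{n=0}^{∞} u^n · ( ∑_{x ∈ Ω(k,n)} (∑_{j=1}^{k} x_j)!·E_{β, β∑_j x_j + 1}^{∑_j x_j + 1}(-λ t^β)·∏_{j=1}^{k} ((λ_j t^β)^{x_j}/x_j!) ), where Ω(k,n) = {x ∈ ℕ^k : ∑_j j x_j = n}, E_{β,1}(w) = ∑_{r≥0} w^r/Γ(βr+1), and E_{α,b}^{γ}(w) = ∑_{r≥0} (γ)_r w^r/(r! Γ(αr+b)) with (γ)_r the rising factorial. -/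
open scoped BigOperators

/-- Two-parameter Mittag-Leffler function `E_{β,1}(w) = ∑_{r≥0} w^r/Γ(βr+1)`. -/
noncomputable def mittagLeffler (β w : ℝ) : ℝ :=
  ∑' r : ℕ, w ^ r / Real.Gamma (β * r + 1)

/-- Three-parameter Mittag-Leffler function
`E_{α,b}^{γ}(w) = ∑_{r≥0} (γ)_r w^r/(r! Γ(αr+b))` with rising factorial `(γ)_r`. -/
noncomputable def mittagLeffler3 (a b g w : ℝ) : ℝ :=
  ∑' r : ℕ, (∏ i ∈ Finset.range r, (g + i)) * w ^ r /
      ((Nat.factorial r : ℝ) * Real.Gamma (a * r + b))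

/-!
Write the argument of `E_{β,1}` as `-w + ∑_j d_j` with `w = λ t^β` and `d_j = λ_j t^β u^j`.
Expanding each power `(-w + ∑_j d_j)^N` by the multinomial theorem turns `E_{β,1}` into a series
over `(x, r) ∈ ℕ^k × ℕ`, which converges absolutely because it is dominated termwise by the
same expansion of the entire function `E_{β,1}(|w| + ∑_j |d_j|)`. Summing first over the
exponent `r` of `-w` gives `|x|! E^{|x|+1}_{β,β|x|+1}(-w)`, since `(|x| + r)! / |x|!` is the
rising factorial `(|x| + 1)_r`; grouping the remaining terms by `n = ∑_j j x_j` collects `u^n`.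
-/

open Finset Real Filter
open scoped Nat

lemma Real.natCast_rpow_le_Gamma {M : ℕ} (hM : 1 ≤ M) {s : ℝ} (hs : 0 ≤ s) :
    (M : ℝ) ^ s ≤ Gamma (M + 1 + s) := by
  have hM0 : (0 : ℝ) < M := by exact_mod_cast hM
  have hfac : (1 : ℝ) ≤ Gamma (M + 1) := by
    rw [Gamma_nat_eq_factorial]
    exact_mod_cast Nat.one_le_iff_ne_zero.mpr M.factorial_ne_zero
  rcases hs.eq_or_lt with rfl | hs
  · simpa using hfac
  -- log-convexity of `Γ`: the chord slope of `log Γ` from `M` to `M + 1` is `log M`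
  have hlog : log (Gamma (M + 1)) + s * log M ≤ log (Gamma (M + 1 + s)) := by
    simpa using BohrMollerup.f_add_nat_ge convexOn_log_Gamma
      (fun {y} hy => by
        rw [Function.comp_apply, Gamma_add_one hy.ne', log_mul hy.ne' (Gamma_pos_of_pos hy).ne',
          add_comm, Function.comp_apply])
      (n := M + 1) (by omega) hs
  calc (M : ℝ) ^ s ≤ Gamma (M + 1) * (M : ℝ) ^ s := le_mul_of_one_le_left (by positivity) hfac
    _ = exp (log (Gamma (M + 1)) + s * log M) := by
      rw [exp_add, exp_log (by linarith), rpow_def_of_pos hM0, mul_comm s]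
    _ ≤ Gamma (M + 1 + s) := by
      rw [← exp_log (Gamma_pos_of_pos (by positivity : (0 : ℝ) < M + 1 + s))]
      exact exp_le_exp.mpr hlog

lemma summable_pow_div_Gamma {β : ℝ} (hβ : 0 < β) (a : ℝ) :
    Summable fun N : ℕ => a ^ N / Gamma (β * N + 1) := by
  have hΓ (N : ℕ) : 0 < Gamma (β * N + 1) := Gamma_pos_of_pos (by positivity)
  obtain ⟨M, hM1, hMa⟩ : ∃ M : ℕ, 1 ≤ M ∧ 2 * |a| ≤ (M : ℝ) ^ β :=
    ((eventually_ge_atTop 1).and (((tendsto_rpow_atTop hβ).comp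
      tendsto_natCast_atTop_atTop).eventually_ge_atTop (2 * |a|))).exists
  have hM0 : (0 : ℝ) < M := by exact_mod_cast hM1
  have hMβ : 0 < (M : ℝ) ^ β := rpow_pos_of_pos hM0 β
  refine (summable_geometric_two.mul_left ((M : ℝ) ^ (M : ℝ))).of_norm_bounded_eventually_nat ?_
  filter_upwards [eventually_ge_atTop ⌈(M : ℝ) / β⌉₊] with N hN
  have hβN : (M : ℝ) ≤ β * N := by
    rw [← div_le_iff₀' hβ]
    exact Nat.ceil_le.mp hN
  have hGamma : ((M : ℝ) ^ β) ^ N / (M : ℝ) ^ (M : ℝ) ≤ Gamma (β * N + 1) := by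
    have := Real.natCast_rpow_le_Gamma hM1 (sub_nonneg.mpr hβN)
    rwa [show (M : ℝ) + 1 + (β * N - M) = β * N + 1 by ring, rpow_sub hM0, rpow_mul hM0.le,
      rpow_natCast] at this
  have hq : |a| / (M : ℝ) ^ β ≤ 1 / 2 := by
    rw [div_le_iff₀ hMβ]
    linarith
  calc ‖a ^ N / Gamma (β * N + 1)‖ = |a| ^ N / Gamma (β * N + 1) := by
        rw [Real.norm_eq_abs, abs_div, abs_pow, abs_of_pos (hΓ N)]
    _ ≤ |a| ^ N / (((M : ℝ) ^ β) ^ N / (M : ℝ) ^ (M : ℝ)) := by gcongr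
    _ = (M : ℝ) ^ (M : ℝ) * (|a| / (M : ℝ) ^ β) ^ N := by
        rw [div_pow]
        field_simp
    _ ≤ (M : ℝ) ^ (M : ℝ) * (1 / 2) ^ N := by gcongr

lemma Summable.tsum_eq_tsum_fiberwise_ite {α β E : Type*} [DecidableEq β]
    [NormedAddCommGroup E] [CompleteSpace E] {f : α → E} (hf : Summable f) (g : α → β) :
    ∑' x, f x = ∑' b, ∑' x, if g x = b then f x else 0 := by
  rw [← (hf.hasSum.tsum_fiberwise g).tsum_eq]
  refine tsum_congr fun b => ?_
  rw [_root_.tsum_subtype]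
  exact tsum_congr fun x => by simp [Set.indicator]

section Multinomial

variable {ι E : Type*} [Fintype ι] [DecidableEq ι]

lemma preimage_sum_singleton_eq_piAntidiag (N : ℕ) :
    (fun y : ι → ℕ => ∑ i, y i) ⁻¹' {N} = ↑(piAntidiag (univ : Finset ι) N) := by
  ext y
  simp [mem_piAntidiag]

lemma tsum_fiber_sum_eq_sum_piAntidiag [AddCommMonoid E] [TopologicalSpace E]
    (f : (ι → ℕ) → E) (N : ℕ) :
    ∑' y : (fun y : ι → ℕ => ∑ i, y i) ⁻¹' {N}, f y = ∑ y ∈ piAntidiag univ N, f y := by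
  rw [preimage_sum_singleton_eq_piAntidiag, Finset.tsum_subtype']

lemma summable_of_summable_sum_piAntidiag {f : (ι → ℕ) → ℝ} (hf : 0 ≤ f)
    (h : Summable fun N => ∑ y ∈ piAntidiag univ N, f y) : Summable f := by
  rw [summable_partition hf (s := fun N => (fun y : ι → ℕ => ∑ i, y i) ⁻¹' {N})
    (fun y => ⟨∑ i, y i, rfl, fun _ h => h.symm⟩)]
  refine ⟨fun N => ?_, by simpa only [tsum_fiber_sum_eq_sum_piAntidiag] using h⟩
  rw [preimage_sum_singleton_eq_piAntidiag]
  exact (piAntidiag univ N).summable f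

lemma Summable.hasSum_sum_piAntidiag [NormedAddCommGroup E] [CompleteSpace E]
    {f : (ι → ℕ) → E} (hf : Summable f) :
    HasSum (fun N => ∑ y ∈ piAntidiag univ N, f y) (∑' y, f y) := by
  simpa only [tsum_fiber_sum_eq_sum_piAntidiag] using
    hf.hasSum.tsum_fiberwise fun y : ι → ℕ => ∑ i, y i

theorem hasSum_mittagLeffler_multinomial {β : ℝ} (hβ : 0 < β) (c : ι → ℝ) :
    HasSum (fun y : ι → ℕ => Nat.multinomial univ y * (∏ i, c i ^ y i) /
      Gamma (β * ↑(∑ i, y i) + 1)) (mittagLeffler β (∑ i, c i)) := by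
  set term : (ι → ℝ) → (ι → ℕ) → ℝ := fun c y =>
    Nat.multinomial univ y * (∏ i, c i ^ y i) / Gamma (β * ↑(∑ i, y i) + 1)
  have hfiber (c : ι → ℝ) (N : ℕ) :
      ∑ y ∈ piAntidiag univ N, term c y = (∑ i, c i) ^ N / Gamma (β * N + 1) := by
    rw [Finset.sum_pow_eq_sum_piAntidiag, sum_div]
    exact sum_congr rfl fun y hy => by simp only [term, (mem_piAntidiag.mp hy).1, mul_div_assoc]
  have hΓ (y : ι → ℕ) : 0 < Gamma (β * ↑(∑ i, y i) + 1) := Gamma_pos_of_pos (by positivity)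
  have habs : Summable (term fun i => |c i|) :=
    summable_of_summable_sum_piAntidiag (fun y => by positivity [hΓ y])
      (by simpa only [hfiber] using summable_pow_div_Gamma hβ _)
  have hsum : Summable (term c) := .of_norm <| habs.congr fun y => by
    simp only [term, norm_div, norm_mul, norm_prod, norm_pow, Real.norm_eq_abs, Nat.abs_cast,
      abs_of_pos (hΓ y)]
  have hfib := hsum.hasSum_sum_piAntidiag
  simp only [hfiber] at hfib
  rw [mittagLeffler, hfib.tsum_eq]
  exact hsum.hasSum

end Multinomial

lemma Nat.cast_multinomial {α K : Type*} [Field K] [CharZero K] (s : Finset α) (f : α → ℕ) :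
    (Nat.multinomial s f : K) = (∑ i ∈ s, f i)! / ∏ i ∈ s, ((f i)! : K) := by
  rw [eq_div_iff (prod_ne_zero_iff.mpr fun i _ => Nat.cast_ne_zero.mpr (f i).factorial_ne_zero),
    mul_comm]
  exact_mod_cast Nat.multinomial_spec s f

lemma factorial_mul_prod_range_add_one_add {R : Type*} [CommSemiring R] (m r : ℕ) :
    (m ! : R) * ∏ i ∈ range r, ((m : R) + 1 + i) = (m + r)! := by
  rw [← Nat.factorial_mul_ascFactorial, Nat.ascFactorial_eq_prod_range]
  push_cast
  rfl

section Cons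

variable {k : ℕ}

lemma hasSum_mittagLeffler_cons {β : ℝ} (hβ : 0 < β) (w : ℝ) (d : Fin k → ℝ) :
    HasSum (fun p : (Fin k → ℕ) × ℕ =>
      Nat.multinomial univ (Fin.cons p.2 p.1 : Fin (k + 1) → ℕ) *
        (∏ i, (Fin.cons w d : Fin (k + 1) → ℝ) i ^ (Fin.cons p.2 p.1 : Fin (k + 1) → ℕ) i) /
        Gamma (β * ↑(∑ i, (Fin.cons p.2 p.1 : Fin (k + 1) → ℕ) i) + 1))
      (mittagLeffler β (w + ∑ j, d j)) := by
  have hcons := hasSum_mittagLeffler_multinomial hβ (Fin.cons w d : Fin (k + 1) → ℝ)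
  rw [Fin.sum_cons] at hcons
  exact ((Equiv.prodComm _ _).trans (Fin.consEquiv fun _ => ℕ)).hasSum_iff.mpr hcons

lemma tsum_multinomial_cons (β w : ℝ) (d : Fin k → ℝ) (x : Fin k → ℕ) :
    ∑' r : ℕ, Nat.multinomial univ (Fin.cons r x : Fin (k + 1) → ℕ) *
        (∏ i, (Fin.cons w d : Fin (k + 1) → ℝ) i ^ (Fin.cons r x : Fin (k + 1) → ℕ) i) /
        Gamma (β * ↑(∑ i, (Fin.cons r x : Fin (k + 1) → ℕ) i) + 1) =
      (∑ j, x j)! * mittagLeffler3 β (β * ↑(∑ j, x j) + 1) (↑(∑ j, x j) + 1) w *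
        ∏ j, d j ^ x j / (x j)! := by
  rw [mittagLeffler3, ← tsum_mul_left, ← tsum_mul_right]
  refine tsum_congr fun r => ?_
  simp only [Nat.cast_multinomial, Fin.sum_univ_succ, Fin.prod_univ_succ, Fin.cons_zero,
    Fin.cons_succ, prod_div_distrib]
  generalize ∑ j, x j = m
  rw [add_comm r m, ← factorial_mul_prod_range_add_one_add m r,
    show β * ((m + r : ℕ) : ℝ) + 1 = β * r + (β * m + 1) by push_cast; ring]
  ring

end Cons

theorem gfcp_pgf_general (β : ℝ) (hβ0 : 0 < β)
    (k : ℕ) (lam : Fin k → ℝ)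
    (t : ℝ) (u : ℝ) :
    mittagLeffler β (-(t ^ β * ∑ j, lam j * (1 - u ^ (j.1 + 1)))) =
      ∑' n : ℕ, u ^ n *
        ∑' x : Fin k → ℕ,
          (if (∑ j, (j.1 + 1) * x j) = n then
            (Nat.factorial (∑ j, x j) : ℝ) *
              mittagLeffler3 β (β * (∑ j, x j) + 1) ((∑ j, x j) + 1)
                (-((∑ j, lam j) * t ^ β)) *
              ∏ j, (lam j * t ^ β) ^ (x j) / (Nat.factorial (x j) : ℝ)
          else 0) := by
  set T := t ^ β
  have harg : -(T * ∑ j, lam j * (1 - u ^ (j.1 + 1))) =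
      -((∑ j, lam j) * T) + ∑ j, lam j * T * u ^ (j.1 + 1) := by
    rw [mul_sum, sum_mul, neg_add_eq_sub, ← sum_sub_distrib, ← sum_neg_distrib]
    exact sum_congr rfl fun j _ => by ring
  have hpow (x : Fin k → ℕ) : ∏ j, (lam j * T * u ^ (j.1 + 1)) ^ x j / (x j)! =
      u ^ (∑ j, (j.1 + 1) * x j) * ∏ j, (lam j * T) ^ x j / (x j)! := by
    rw [← prod_pow_eq_pow_sum, ← prod_mul_distrib]
    exact prod_congr rfl fun j _ => by ring
  have hpairs := hasSum_mittagLeffler_cons hβ0 (-((∑ j, lam j) * T))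
    fun j => lam j * T * u ^ (j.1 + 1)
  rw [harg, ← hpairs.tsum_eq, hpairs.summable.tsum_prod,
    hpairs.summable.prod.tsum_eq_tsum_fiberwise_ite fun x => ∑ j, (j.1 + 1) * x j]
  refine tsum_congr fun n => ?_
  rw [← tsum_mul_left]
  refine tsum_congr fun x => ?_
  split_ifs with hx
  · rw [tsum_multinomial_cons, hpow, hx]
    ring
  · rw [mul_zero]

/-- Pgf of the generalized fractional counting process:
`E_{β,1}(-t^β ∑_j λ_j(1-u^j)) = ∑_n u^n ∑_{x∈Ω(k,n)} (∑_j x_j)!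
  E_{β, β∑x_j+1}^{∑x_j+1}(-λt^β) ∏_j (λ_j t^β)^{x_j}/x_j!`. -/
theorem gfcp_pgf (β : ℝ) (hβ0 : 0 < β) (hβ1 : β ≤ 1)
    (k : ℕ) (lam : Fin k → ℝ) (hlam : ∀ j, 0 < lam j)
    (t : ℝ) (ht : 0 ≤ t) (u : ℝ) (hu : |u| ≤ 1) :
    mittagLeffler β (-(t ^ β * ∑ j, lam j * (1 - u ^ (j.1 + 1)))) =
      ∑' n : ℕ, u ^ n *
        ∑' x : Fin k → ℕ,
          (if (∑ j, (j.1 + 1) * x j) = n then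
            (Nat.factorial (∑ j, x j) : ℝ) *
              mittagLeffler3 β (β * (∑ j, x j) + 1) ((∑ j, x j) + 1)
                (-((∑ j, lam j) * t ^ β)) *
              ∏ j, (lam j * t ^ β) ^ (x j) / (Nat.factorial (x j) : ℝ)
          else 0) :=
  gfcp_pgf_general β hβ0 k lam t u
end
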